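/- arXiv:1910.06681 — 5 statements merged into one kernel-verified Lean document; each statement's English description precedes it below -/
import Mathlib

section
/- Let ω>0 and let x:[−ω,ω]→ℝ²∖{0} be a C² curve with ẍ(t)=−x(t)/|x(t)|³ for all t∈(−ω,ω) and (1/2)|ẋ(t)|²−1/|x(t)|=−1 for all t∈[−ω,ω], and suppose its angular momentum c_x is nonzero. Then there exists f∈ℝ² with |f|<1 such that |x(t)|+|x(t)−f|=1 for all t∈[−ω,ω]; that is, the trajectory of x lies on an ellipse with one focus at the origin and major axis of length 1. -/
noncomputable section
open Set Real Filter
open scoped RealInnerProductSpace Topology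

/-- The Euclidean plane. -/
abbrev E2 := EuclideanSpace ℝ (Fin 2)

/-- The point (a, b) of the Euclidean plane. -/
def pt (a b : ℝ) : E2 := (WithLp.equiv 2 (Fin 2 → ℝ)).symm ![a, b]

/-- Velocity of a curve defined on the interval [-ω, ω]. -/
def vel (ω : ℝ) (x : ℝ → E2) (t : ℝ) : E2 := derivWithin x (Icc (-ω) ω) t

/-- Solution of the fixed-energy (h = -1) Kepler problem on [-ω, ω]:
a C² curve in ℝ² ∖ {0} with ẍ = -x/|x|³ on (-ω, ω) and (1/2)|ẋ|² - 1/|x| = -1 on [-ω, ω]. -/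
def IsKeplerSol (ω : ℝ) (x : ℝ → E2) : Prop :=
  0 < ω ∧ ContDiffOn ℝ 2 x (Icc (-ω) ω) ∧
  (∀ t ∈ Icc (-ω) ω, x t ≠ 0) ∧
  (∀ t ∈ Ioo (-ω) ω,
    derivWithin (vel ω x) (Icc (-ω) ω) t = -(‖x t‖ ^ 3)⁻¹ • x t) ∧
  (∀ t ∈ Icc (-ω) ω, (1/2) * ‖vel ω x t‖ ^ 2 - ‖x t‖⁻¹ = -1)

/-- Solution of problem (K) on [-ω, ω] with endpoints p, q. -/
def IsKeplerSolPQ (ω : ℝ) (p q : E2) (x : ℝ → E2) : Prop :=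
  IsKeplerSol ω x ∧ x (-ω) = p ∧ x ω = q

/-- Angular momentum c_x = x₁ẋ₂ - x₂ẋ₁ (a constant of motion, evaluated at t = 0). -/
def angMom (ω : ℝ) (x : ℝ → E2) : ℝ :=
  x 0 0 * vel ω x 0 1 - x 0 1 * vel ω x 0 0

/-- Inner product on the plane in coordinates. -/
lemma inner_e2 (u w : E2) : ⟪u, w⟫ = u 0 * w 0 + u 1 * w 1 := by
  simp [PiLp.inner_apply, Fin.sum_univ_two, RCLike.inner_apply, conj_trivial]
  ring

lemma sq_eq_of_nonneg {a b : ℝ} (ha : 0 ≤ a) (hb : 0 ≤ b) (h : a ^ 2 = b ^ 2) : a = b := by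
  rw [← Real.sqrt_sq ha, ← Real.sqrt_sq hb, h]

/-- A fixed-energy Keplerian arc with nonzero angular momentum lies on an ellipse with one
focus at the origin and major axis of length 1. -/
theorem kepler_on_ellipse (ω : ℝ) (x : ℝ → E2) (hx : IsKeplerSol ω x)
    (hc : angMom ω x ≠ 0) :
    ∃ f : E2, ‖f‖ < 1 ∧ ∀ t ∈ Icc (-ω) ω, ‖x t‖ + ‖x t - f‖ = 1 := by
  obtain ⟨hω, hC2, hne, hODE, hEnergy⟩ := hx
  have hωω : -ω < ω := by linarith
  have hUD : UniqueDiffOn ℝ (Icc (-ω) ω) := uniqueDiffOn_Icc hωω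
  set v : ℝ → E2 := vel ω x with hvdef
  have hmemN : ∀ t ∈ Ioo (-ω) ω, Icc (-ω) ω ∈ 𝓝 t := fun t ht => Icc_mem_nhds ht.1 ht.2
  set En : ℝ → E2 := fun t => (⟪v t, v t⟫ / 2 - 1) • x t - ⟪x t, v t⟫ • v t with hEndef
  have hr : ∀ t ∈ Icc (-ω) ω, 0 < ‖x t‖ := fun t ht => norm_pos_iff.mpr (hne t ht)
  have hinv : ∀ t ∈ Icc (-ω) ω, ‖x t‖⁻¹ = ⟪v t, v t⟫ / 2 + 1 := by
    intro t ht
    have h := hEnergy t ht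
    rw [real_inner_self_eq_norm_sq]; linarith
  -- pointwise ellipse identity
  have hpoint : ∀ t ∈ Icc (-ω) ω, ‖x t‖ + ‖x t + En t‖ = 1 := by
    intro t ht
    have hr0 := hr t ht
    have hA : (0 : ℝ) ≤ ⟪v t, v t⟫ := real_inner_self_nonneg
    have hxE : x t + En t = (⟪v t, v t⟫ / 2) • x t - ⟪x t, v t⟫ • v t := by
      rw [hEndef]; module
    have hnorm : ‖x t + En t‖ ^ 2 = (⟪v t, v t⟫ / 2 * ‖x t‖) ^ 2 := by
      rw [← real_inner_self_eq_norm_sq, hxE]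
      simp only [inner_sub_left, inner_sub_right, real_inner_smul_left, real_inner_smul_right,
        real_inner_comm (v t) (x t)]
      rw [real_inner_self_eq_norm_sq (x t)]
      ring
    have h1 : ‖x t + En t‖ = ⟪v t, v t⟫ / 2 * ‖x t‖ :=
      sq_eq_of_nonneg (norm_nonneg _) (by positivity) hnorm
    have h2 := hinv t ht
    have h3 : ⟪v t, v t⟫ / 2 = ‖x t‖⁻¹ - 1 := by linarith
    rw [h1, h3, sub_mul, inv_mul_cancel₀ (ne_of_gt hr0)]
    ring
  -- derivatives at interior points
  have hXd : ∀ t ∈ Ioo (-ω) ω, HasDerivAt x (v t) t := by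
    intro t ht
    have ht' : t ∈ Icc (-ω) ω := Ioo_subset_Icc_self ht
    have hd := ((hC2.differentiableOn (by norm_num)) t ht').differentiableAt
      (hmemN t ht)
    have hh := hd.hasDerivAt
    show HasDerivAt x (derivWithin x (Icc (-ω) ω) t) t
    rwa [derivWithin_of_mem_nhds (hmemN t ht)]
  have hv1 : ContDiffOn ℝ 1 v (Icc (-ω) ω) := hC2.derivWithin hUD (by norm_num)
  have hVd : ∀ t ∈ Ioo (-ω) ω, HasDerivAt v (-(‖x t‖ ^ 3)⁻¹ • x t) t := by
    intro t ht
    have ht' : t ∈ Icc (-ω) ω := Ioo_subset_Icc_self ht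
    have hd := ((hv1.differentiableOn (by norm_num)) t ht').differentiableAt
      (hmemN t ht)
    have hh := hd.hasDerivAt
    rwa [← derivWithin_of_mem_nhds (hmemN t ht), hODE t ht] at hh
  -- the eccentricity vector is constant
  have hEd : ∀ t ∈ Ioo (-ω) ω, HasDerivAt En 0 t := by
    intro t ht
    have ht' : t ∈ Icc (-ω) ω := Ioo_subset_Icc_self ht
    have hr0 := hr t ht'
    have hx' := hXd t ht
    have hv' := hVd t ht
    have h1 : HasDerivAt (fun s => ⟪v s, v s⟫ / 2 - 1)
        ((⟪v t, -(‖x t‖ ^ 3)⁻¹ • x t⟫ + ⟪-(‖x t‖ ^ 3)⁻¹ • x t, v t⟫) / 2) t :=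
      ((HasDerivAt.inner ℝ hv' hv').div_const 2).sub_const 1
    have h2 := h1.smul hx'
    have h3 : HasDerivAt (fun s => ⟪x s, v s⟫)
        (⟪x t, -(‖x t‖ ^ 3)⁻¹ • x t⟫ + ⟪v t, v t⟫) t := HasDerivAt.inner ℝ hx' hv'
    have h4 := h3.smul hv'
    have h5 := h2.sub h4
    have e1 : ⟪v t, -(‖x t‖ ^ 3)⁻¹ • x t⟫ = -(‖x t‖ ^ 3)⁻¹ * ⟪x t, v t⟫ := by
      rw [real_inner_smul_right, real_inner_comm]
    have e2 : ⟪-(‖x t‖ ^ 3)⁻¹ • x t, v t⟫ = -(‖x t‖ ^ 3)⁻¹ * ⟪x t, v t⟫ := by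
      rw [real_inner_smul_left]
    have e3 : ⟪x t, -(‖x t‖ ^ 3)⁻¹ • x t⟫ = -(⟪v t, v t⟫ / 2 + 1) := by
      rw [real_inner_smul_right, real_inner_self_eq_norm_sq, ← hinv t ht']
      field_simp
    rw [e1, e2, e3] at h5
    refine h5.congr_deriv ?_
    rw [hvdef] at *
    module
  have h0Ioo : (0 : ℝ) ∈ Ioo (-ω) ω := ⟨by linarith, hω⟩
  have h0Icc : (0 : ℝ) ∈ Icc (-ω) ω := Ioo_subset_Icc_self h0Ioo
  have hconst : ∀ t ∈ Ioo (-ω) ω, En t = En 0 := by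
    intro t ht
    refine (convex_Ioo (-ω) ω).is_const_of_fderivWithin_eq_zero
      (fun s hs => ((hEd s hs).differentiableAt).differentiableWithinAt) ?_ ht h0Ioo
    intro s hs
    have hfd := (hEd s hs).hasFDerivAt.fderiv
    rw [fderivWithin_of_isOpen isOpen_Ioo hs, hfd]
    ext y
    simp
  -- the focus has norm < 1
  have hE0sq : ‖En 0‖ ^ 2 = 1 - 2 * angMom ω x ^ 2 := by
    have hr0 := hr 0 h0Icc
    have hEnvsq : ‖x 0‖⁻¹ = ⟪v 0, v 0⟫ / 2 + 1 := hinv 0 h0Icc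
    have hRsq : ⟪x 0, x 0⟫ * (⟪v 0, v 0⟫ / 2 + 1) ^ 2 = 1 := by
      rw [real_inner_self_eq_norm_sq, ← hEnvsq]
      field_simp
    have hLag : angMom ω x ^ 2 = ⟪v 0, v 0⟫ * ⟪x 0, x 0⟫ - ⟪v 0, x 0⟫ ^ 2 := by
      rw [inner_e2, inner_e2, inner_e2, angMom, hvdef]
      ring
    rw [← real_inner_self_eq_norm_sq, hEndef]
    simp only [inner_sub_left, inner_sub_right, real_inner_smul_left, real_inner_smul_right,
      real_inner_comm (v 0) (x 0)]
    linear_combination hRsq + 2 * hLag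
  have hflt : ‖En 0‖ < 1 := by
    have hc2 : 0 < angMom ω x ^ 2 := (sq_nonneg _).lt_of_ne (Ne.symm (pow_ne_zero 2 hc))
    nlinarith [norm_nonneg (En 0)]
  refine ⟨-En 0, by simpa using hflt, ?_⟩
  -- the identity on the open interval
  have hIoo : ∀ t ∈ Ioo (-ω) ω, ‖x t‖ + ‖x t + En 0‖ = 1 := by
    intro t ht
    rw [← hconst t ht]
    exact hpoint t (Ioo_subset_Icc_self ht)
  -- extend by continuity to the closed interval
  intro t ht
  rw [sub_neg_eq_add]
  set g : ℝ → ℝ := fun s => ‖x s‖ + ‖x s + En 0‖ with hgdef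
  have hgc : ContinuousOn g (Icc (-ω) ω) :=
    (hC2.continuousOn.norm).add ((hC2.continuousOn.add continuousOn_const).norm)
  have htcl : t ∈ closure (Ioo (-ω) ω) := by rwa [closure_Ioo (ne_of_lt hωω)]
  haveI hnb : (𝓝[Ioo (-ω) ω] t).NeBot := mem_closure_iff_nhdsWithin_neBot.mp htcl
  have l1 : Tendsto g (𝓝[Ioo (-ω) ω] t) (𝓝 (g t)) :=
    ((hgc t ht).mono_left (nhdsWithin_mono t Ioo_subset_Icc_self))
  have l2 : Tendsto g (𝓝[Ioo (-ω) ω] t) (𝓝 1) :=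
    Tendsto.congr' (by filter_upwards [self_mem_nhdsWithin] with s hs using (hIoo s hs).symm)
      tendsto_const_nhds
  exact tendsto_nhds_unique l1 l2
end
end

section
/- Let 0<R<1/2, φ₀∈(0,π), p=(R cos φ₀, −R sin φ₀) and q=(R cos φ₀, R sin φ₀). Then there exist ω₁,ω₂,ω₃,ω₄>0 and solutions x_int⁺, x_int⁻, x_ext⁺, x_ext⁻ of problem (K) on [−ω_i,ω_i] with endpoints p,q such that: the angular momenta satisfy c_{x_int⁺}>0, c_{x_ext⁺}>0, c_{x_int⁻}<0, c_{x_ext⁻}<0; |x_int^±(t)|<R for all t in the corresponding open interval (−ω_i,ω_i); and |x_ext^±(t)|>R for all t in the corresponding open interval (−ω_i,ω_i). -/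
set_option maxHeartbeats 1000000


noncomputable section
open Set Real Filter
open scoped RealInnerProductSpace

/-! ### Auxiliary lemmas about `pt` -/

lemma pt_zero (a b : ℝ) : (pt a b) 0 = a := rfl

lemma pt_one (a b : ℝ) : (pt a b) 1 = b := rfl

lemma norm_pt (a b : ℝ) : ‖(pt a b : E2)‖ = Real.sqrt (a ^ 2 + b ^ 2) := by
  rw [EuclideanSpace.norm_eq]
  congr 1
  rw [Fin.sum_univ_two]
  simp [pt_zero, pt_one, Real.norm_eq_abs, sq_abs]

lemma norm_pt_sq (a b : ℝ) : ‖(pt a b : E2)‖ ^ 2 = a ^ 2 + b ^ 2 := by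
  rw [norm_pt, Real.sq_sqrt (by positivity)]

lemma smul_pt (c a b : ℝ) : c • (pt a b : E2) = pt (c * a) (c * b) := by
  ext i
  fin_cases i <;> rfl

lemma pt_congr {a b a' b' : ℝ} (h1 : a = a') (h2 : b = b') : pt a b = pt a' b' := by
  rw [h1, h2]

lemma hasDerivAt_pt {x1 x2 : ℝ → ℝ} {a b t : ℝ}
    (h1 : HasDerivAt x1 a t) (h2 : HasDerivAt x2 b t) :
    HasDerivAt (fun s => pt (x1 s) (x2 s)) (pt a b) t := by
  have hY : HasDerivAt (fun s => (![x1 s, x2 s] : Fin 2 → ℝ)) ![a, b] t := by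
    rw [hasDerivAt_pi]
    intro i
    fin_cases i
    · simpa using h1
    · simpa using h2
  exact ((EuclideanSpace.equiv (Fin 2) ℝ).symm :
    (Fin 2 → ℝ) →L[ℝ] E2).hasFDerivAt.comp_hasDerivAt t hY

lemma contDiff_two_of_hasDerivAt {f g h : ℝ → ℝ}
    (hf : ∀ t, HasDerivAt f (g t) t) (hg : ∀ t, HasDerivAt g (h t) t)
    (hh : Continuous h) : ContDiff ℝ 2 f := by
  have hdf : deriv f = g := funext fun t => (hf t).deriv
  have hdg : deriv g = h := funext fun t => (hg t).deriv
  have hg1 : ContDiff ℝ 1 g := by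
    rw [contDiff_one_iff_deriv, hdg]
    exact ⟨fun t => (hg t).differentiableAt, hh⟩
  have h2 : ContDiff ℝ ((1 : ℕ) + 1) f := by
    rw [contDiff_succ_iff_deriv, hdf]
    exact ⟨fun t => (hf t).differentiableAt, by simp, hg1⟩
  exact_mod_cast h2

/-- Core construction: from coordinatewise data satisfying the Kepler equations,
build a Kepler solution. -/
lemma mk_sol {ω : ℝ} (hω : 0 < ω) (x1 x2 v1 v2 r : ℝ → ℝ)
    (h1 : ∀ t, HasDerivAt x1 (v1 t) t) (h2 : ∀ t, HasDerivAt x2 (v2 t) t)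
    (hv1 : ∀ t, HasDerivAt v1 (-(x1 t) / r t ^ 3) t)
    (hv2 : ∀ t, HasDerivAt v2 (-(x2 t) / r t ^ 3) t)
    (hrc : Continuous r) (hrpos : ∀ t, 0 < r t)
    (hsq : ∀ t, x1 t ^ 2 + x2 t ^ 2 = r t ^ 2)
    (hen : ∀ t, v1 t ^ 2 + v2 t ^ 2 = 2 / r t - 2) :
    IsKeplerSol ω (fun t => pt (x1 t) (x2 t)) ∧
    (∀ t ∈ Icc (-ω) ω, vel ω (fun t => pt (x1 t) (x2 t)) t = pt (v1 t) (v2 t)) ∧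
    (∀ t, ‖(pt (x1 t) (x2 t) : E2)‖ = r t) := by
  have hnorm : ∀ t, ‖(pt (x1 t) (x2 t) : E2)‖ = r t := by
    intro t
    rw [norm_pt, hsq t, Real.sqrt_sq (hrpos t).le]
  have hrne : ∀ t, r t ≠ 0 := fun t => (hrpos t).ne'
  have hX : ∀ t, HasDerivAt (fun t => (pt (x1 t) (x2 t) : E2)) (pt (v1 t) (v2 t)) t :=
    fun t => hasDerivAt_pt (h1 t) (h2 t)
  have hV : ∀ t, HasDerivAt (fun t => (pt (v1 t) (v2 t) : E2))
      (pt (-(x1 t) / r t ^ 3) (-(x2 t) / r t ^ 3)) t :=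
    fun t => hasDerivAt_pt (hv1 t) (hv2 t)
  have hωω : -ω < ω := by linarith
  have hu : UniqueDiffOn ℝ (Icc (-ω) ω) := uniqueDiffOn_Icc hωω
  have hvel : ∀ t ∈ Icc (-ω) ω,
      vel ω (fun t => (pt (x1 t) (x2 t) : E2)) t = pt (v1 t) (v2 t) := by
    intro t ht
    exact ((hX t).hasDerivWithinAt).derivWithin (hu t ht)
  refine ⟨⟨hω, ?_, ?_, ?_, ?_⟩, hvel, hnorm⟩
  · -- ContDiffOn
    have hdx1 : Differentiable ℝ x1 := fun t => (h1 t).differentiableAt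
    have hdx2 : Differentiable ℝ x2 := fun t => (h2 t).differentiableAt
    have hx1c : Continuous x1 := hdx1.continuous
    have hx2c : Continuous x2 := hdx2.continuous
    have hr3 : Continuous fun t => r t ^ 3 := hrc.pow 3
    have hc1 : ContDiff ℝ 2 x1 :=
      contDiff_two_of_hasDerivAt h1 hv1
        (hx1c.neg.div hr3 fun t => pow_ne_zero _ (hrne t))
    have hc2 : ContDiff ℝ 2 x2 :=
      contDiff_two_of_hasDerivAt h2 hv2
        (hx2c.neg.div hr3 fun t => pow_ne_zero _ (hrne t))
    have hY : ContDiff ℝ 2 (fun t => (![x1 t, x2 t] : Fin 2 → ℝ)) := by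
      rw [contDiff_pi]
      intro i
      fin_cases i
      · simpa using hc1
      · simpa using hc2
    exact (((EuclideanSpace.equiv (Fin 2) ℝ).symm :
      (Fin 2 → ℝ) →L[ℝ] E2).contDiff.comp hY).contDiffOn
  · intro t _
    rw [← norm_ne_zero_iff, hnorm]
    exact hrne t
  · intro t ht
    have htIcc : t ∈ Icc (-ω) ω := Ioo_subset_Icc_self ht
    have e1 : derivWithin (vel ω fun t => (pt (x1 t) (x2 t) : E2)) (Icc (-ω) ω) t =
        derivWithin (fun t => (pt (v1 t) (v2 t) : E2)) (Icc (-ω) ω) t :=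
      derivWithin_congr (fun a ha => hvel a ha) (hvel t htIcc)
    rw [e1, ((hV t).hasDerivWithinAt).derivWithin (hu t htIcc), hnorm, smul_pt]
    exact pt_congr (by rw [div_eq_mul_inv]; ring) (by rw [div_eq_mul_inv]; ring)
  · intro t ht
    rw [hvel t ht, norm_pt_sq, hen t]
    rw [hnorm]
    field_simp
    ring

/-- Construction of the interior and exterior arcs, with a sign parameter σ = ±1
multiplying the first coordinate. -/
lemma arcs_core (R φ₀ σ : ℝ) (hR0 : 0 < R) (hR : R < 1/2) (hφ : φ₀ ∈ Ioo 0 π)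
    (hσ : σ = 1 ∨ σ = -1) :
    ∃ (ω₁ ω₂ : ℝ) (x y : ℝ → E2),
      0 < ω₁ ∧ 0 < ω₂ ∧
      IsKeplerSolPQ ω₁ (pt (σ * (R * Real.cos φ₀)) (-(R * Real.sin φ₀)))
        (pt (σ * (R * Real.cos φ₀)) (R * Real.sin φ₀)) x ∧
      0 < σ * angMom ω₁ x ∧ (∀ t ∈ Ioo (-ω₁) ω₁, ‖x t‖ < R) ∧
      IsKeplerSolPQ ω₂ (pt (σ * (R * Real.cos φ₀)) (-(R * Real.sin φ₀)))
        (pt (σ * (R * Real.cos φ₀)) (R * Real.sin φ₀)) y ∧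
      σ * angMom ω₂ y < 0 ∧ (∀ t ∈ Ioo (-ω₂) ω₂, R < ‖y t‖) := by
  obtain ⟨hφ0, hφπ⟩ := hφ
  have hσ2 : σ ^ 2 = 1 := by rcases hσ with h | h <;> rw [h] <;> norm_num
  set c := Real.cos φ₀ with hcdef
  set s := Real.sin φ₀ with hsdef
  have hs0 : 0 < s := Real.sin_pos_of_pos_of_lt_pi hφ0 hφπ
  have hsc : s ^ 2 + c ^ 2 = 1 := Real.sin_sq_add_cos_sq φ₀
  have hcl1 : c < 1 := by
    have h := Real.cos_lt_cos_of_nonneg_of_le_pi le_rfl hφπ.le hφ0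
    simpa using h
  have hcg1 : -1 < c := by
    have h := Real.cos_lt_cos_of_nonneg_of_le_pi hφ0.le le_rfl hφπ
    simpa [hcdef] using h
  have hR2 : 0 < 1 - 2 * R := by linarith
  set D := R ^ 2 * c ^ 2 + 1 - 2 * R with hDdef
  have hD : 0 < D := by nlinarith
  have hDs : Real.sqrt D ^ 2 = D := Real.sq_sqrt hD.le
  set e := Real.sqrt D - R * c with hedef
  have hRcD : R * c < Real.sqrt D := by
    rcases le_or_gt (R * c) 0 with h | h
    · exact lt_of_le_of_lt h (Real.sqrt_pos.2 hD)
    · have h1 : (R * c) ^ 2 < D := by nlinarith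
      have h2 := Real.sqrt_lt_sqrt (by positivity) h1
      rwa [Real.sqrt_sq h.le] at h2
  have he0 : 0 < e := sub_pos.2 hRcD
  have hquad : e ^ 2 + 2 * R * c * e + 2 * R - 1 = 0 := by
    have h : (e + R * c) ^ 2 = D := by
      rw [show e + R * c = Real.sqrt D by rw [hedef]; ring]
      exact hDs
    rw [hDdef] at h
    linear_combination h
  have he1 : e < 1 := by
    have h0 : (0:ℝ) ≤ 1 + R * c := by nlinarith
    have h1 : D < (1 + R * c) ^ 2 := by nlinarith
    have h2 := Real.sqrt_lt_sqrt hD.le h1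
    rw [Real.sqrt_sq h0] at h2
    rw [hedef]; linarith
  have h2Re : 1 - 2 * R < e := by
    rcases le_or_gt (1 - 2 * R + R * c) 0 with h | h
    · have h1 : 0 < Real.sqrt D := Real.sqrt_pos.2 hD
      rw [hedef]; linarith
    · have h1 : (1 - 2 * R + R * c) ^ 2 < D := by
        nlinarith [mul_pos (mul_pos hR0 hR2) (sub_pos.2 hcl1), hDdef]
      have h2 := Real.sqrt_lt_sqrt (by positivity) h1
      rw [Real.sqrt_sq h.le] at h2
      rw [hedef]; linarith
  clear_value e
  clear hedef hDs hRcD hD hDdef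
  -- eccentric anomaly at the endpoints
  set cE0 := (1 - 2 * R) / e with hcE0def
  have hcE0pos : 0 < cE0 := div_pos hR2 he0
  have hcE0lt : cE0 < 1 := (div_lt_one he0).2 h2Re
  set E₀ := Real.arccos cE0 with hE0def
  have hcosE0 : Real.cos E₀ = cE0 := Real.cos_arccos (by linarith) hcE0lt.le
  have hE0pos : 0 < E₀ := Real.arccos_pos.2 hcE0lt
  have hE0lt : E₀ < π / 2 := Real.arccos_lt_pi_div_two.2 hcE0pos
  have hE0pi : E₀ < π := by linarith [Real.pi_pos]
  have hsinE0 : Real.sin E₀ = Real.sqrt (1 - cE0 ^ 2) := Real.sin_arccos cE0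
  have hsinE0pos : 0 < Real.sin E₀ := Real.sin_pos_of_pos_of_lt_pi hE0pos hE0pi
  have hecosE0 : e * Real.cos E₀ = 1 - 2 * R := by
    rw [hcosE0, hcE0def]; field_simp
  -- the mean motion
  set κ := 2 * Real.sqrt 2 with hκdef
  have hκ2 : κ ^ 2 = 8 := by
    rw [hκdef, mul_pow, Real.sq_sqrt (by norm_num : (0:ℝ) ≤ 2)]; norm_num
  have hκ0 : 0 < κ := by rw [hκdef]; positivity
  clear_value κ
  -- the minor semi-axis parameter
  set b' := Real.sqrt (1 - e ^ 2) with hb'def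
  have he2lt : e ^ 2 < 1 := by nlinarith
  have hb'pos : 0 < b' := Real.sqrt_pos.2 (by nlinarith)
  have hb'2 : b' ^ 2 = 1 - e ^ 2 := Real.sq_sqrt (by nlinarith)
  clear_value b'
  have hden : ∀ E, 0 < 1 - e * Real.cos E := by
    intro E
    nlinarith [Real.cos_le_one E, Real.neg_one_le_cos E]
  -- Kepler's equation and the eccentric anomaly as a function of time
  set g : ℝ → ℝ := fun E => (E - e * Real.sin E) / κ with hgdef
  have hg' : ∀ E, HasDerivAt g ((1 - e * Real.cos E) / κ) E := by
    intro E
    have h := ((hasDerivAt_id E).sub ((Real.hasDerivAt_sin E).const_mul e)).div_const κ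
    simpa [hgdef] using h
  have hmono : StrictMono g :=
    strictMono_of_hasDerivAt_pos hg' fun E => div_pos (hden E) hκ0
  have hgdiff : Differentiable ℝ g := fun t => (hg' t).differentiableAt
  have hgcont : Continuous g := hgdiff.continuous
  have hsurj : Function.Surjective g := by
    have hup : Tendsto (fun E : ℝ => (E + -e) / κ) atTop atTop :=
      Tendsto.atTop_div_const hκ0 (tendsto_atTop_add_const_right _ _ tendsto_id)
    have hdown : Tendsto (fun E : ℝ => (E + e) / κ) atBot atBot :=
      Tendsto.atBot_div_const hκ0 (tendsto_atBot_add_const_right _ _ tendsto_id)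
    apply hgcont.surjective
    · refine tendsto_atTop_mono (fun E => ?_) hup
      show (E + -e) / κ ≤ (E - e * Real.sin E) / κ
      apply div_le_div_of_nonneg_right ?_ hκ0.le |>.trans_eq rfl
      nlinarith [mul_nonneg he0.le
        (by linarith [Real.sin_le_one E] : (0:ℝ) ≤ 1 - Real.sin E)]
    · refine tendsto_atBot_mono (fun E => ?_) hdown
      show (E - e * Real.sin E) / κ ≤ (E + e) / κ
      apply div_le_div_of_nonneg_right ?_ hκ0.le |>.trans_eq rfl
      nlinarith [mul_nonneg he0.le
        (by linarith [Real.neg_one_le_sin E] : (0:ℝ) ≤ 1 + Real.sin E)]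
  set Φ := StrictMono.orderIsoOfSurjective g hmono hsurj with hΦdef
  set Ec : ℝ → ℝ := fun t => Φ.symm t with hEcdef
  have hEccont : Continuous Ec := Φ.symm.continuous
  have hEcmono : StrictMono Ec := Φ.symm.strictMono
  have hgEc : ∀ t, g (Ec t) = t := fun t =>
    StrictMono.orderIsoOfSurjective_self_symm_apply g hmono hsurj t
  have hEcg : ∀ E, Ec (g E) = E := fun E =>
    StrictMono.orderIsoOfSurjective_symm_apply_self g hmono hsurj E
  have hEc : ∀ t, HasDerivAt Ec (κ / (1 - e * Real.cos (Ec t))) t := by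
    intro t
    have hne : (1 - e * Real.cos (Ec t)) / κ ≠ 0 := (div_pos (hden _) hκ0).ne'
    have h := HasDerivAt.of_local_left_inverse hEccont.continuousAt
      (hg' (Ec t)) hne (Eventually.of_forall hgEc)
    rwa [inv_div] at h
  -- coordinate functions in terms of the eccentric anomaly
  set X1 : ℝ → ℝ := fun E => σ * ((Real.cos E - e) / 2) with hX1def
  set X2 : ℝ → ℝ := fun E => b' / 2 * Real.sin E with hX2def
  set RR : ℝ → ℝ := fun E => (1 - e * Real.cos E) / 2 with hRRdef
  set V1 : ℝ → ℝ := fun E => σ * (-(κ / 2) * Real.sin E / (1 - e * Real.cos E)) with hV1def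
  set V2 : ℝ → ℝ := fun E => b' / 2 * κ * Real.cos E / (1 - e * Real.cos E) with hV2def
  have hRRpos : ∀ E, 0 < RR E := fun E => by
    rw [hRRdef]; have := hden E; positivity
  have hsqE : ∀ E, X1 E ^ 2 + X2 E ^ 2 = RR E ^ 2 := by
    intro E
    rw [hX1def, hX2def, hRRdef]
    simp only
    have hSC := Real.sin_sq_add_cos_sq E
    linear_combination ((Real.cos E - e) ^ 2 / 4) * hσ2 + (Real.sin E ^ 2 / 4) * hb'2 +
      ((1 - e ^ 2) / 4) * hSC
  have henE : ∀ E, V1 E ^ 2 + V2 E ^ 2 = 2 / RR E - 2 := by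
    intro E
    have hd := (hden E).ne'
    rw [hV1def, hV2def, hRRdef]
    simp only
    have hSC := Real.sin_sq_add_cos_sq E
    field_simp
    linear_combination (κ ^ 2 * Real.sin E ^ 2) * hσ2 +
      (κ ^ 2 * Real.cos E ^ 2) * hb'2 +
      (Real.sin E ^ 2 + (1 - e ^ 2) * Real.cos E ^ 2) * hκ2 +
      8 * hSC
  -- derivatives along the time parametrization
  have hd1 : ∀ t, HasDerivAt (fun u => X1 (Ec u)) (V1 (Ec t)) t := by
    intro t
    have h := ((((Real.hasDerivAt_cos (Ec t)).comp t (hEc t)).sub_const e).div_const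
      2).const_mul σ
    have hd := (hden (Ec t)).ne'
    refine h.congr_deriv (Eq.symm ?_)
    rw [hV1def]
    simp only [Function.comp]
    field_simp
    all_goals ring
  have hd2 : ∀ t, HasDerivAt (fun u => X2 (Ec u)) (V2 (Ec t)) t := by
    intro t
    have h := (((Real.hasDerivAt_sin (Ec t)).comp t (hEc t))).const_mul (b' / 2)
    have hd := (hden (Ec t)).ne'
    refine h.congr_deriv (Eq.symm ?_)
    rw [hV2def]
    simp only [Function.comp]
    field_simp
    all_goals ring
  have hdv1 : ∀ t, HasDerivAt (fun u => V1 (Ec u)) (-(X1 (Ec t)) / RR (Ec t) ^ 3) t := by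
    intro t
    have hd := (hden (Ec t)).ne'
    have hsin : HasDerivAt (fun u => Real.sin (Ec u))
        (Real.cos (Ec t) * (κ / (1 - e * Real.cos (Ec t)))) t :=
      (Real.hasDerivAt_sin (Ec t)).comp t (hEc t)
    have hcos : HasDerivAt (fun u => Real.cos (Ec u))
        (-Real.sin (Ec t) * (κ / (1 - e * Real.cos (Ec t)))) t :=
      (Real.hasDerivAt_cos (Ec t)).comp t (hEc t)
    have hdenD : HasDerivAt (fun u => 1 - e * Real.cos (Ec u))
        (-(e * (-Real.sin (Ec t) * (κ / (1 - e * Real.cos (Ec t)))))) t :=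
      (hcos.const_mul e).const_sub 1
    have h := (((hsin.const_mul (-(κ / 2))).div hdenD hd)).const_mul σ
    refine h.congr_deriv (Eq.symm ?_)
    rw [hX1def, hRRdef]
    simp only
    have hSC := Real.sin_sq_add_cos_sq (Ec t)
    field_simp
    linear_combination (-σ * (e * Real.sin (Ec t) ^ 2 - Real.cos (Ec t) * (1 - Real.cos (Ec t) * e)) /
        (1 - Real.cos (Ec t) * e) ^ 3) * hκ2 +
      (-8 * σ * e / (1 - Real.cos (Ec t) * e) ^ 3) * hSC
  have hdv2 : ∀ t, HasDerivAt (fun u => V2 (Ec u)) (-(X2 (Ec t)) / RR (Ec t) ^ 3) t := by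
    intro t
    have hd := (hden (Ec t)).ne'
    have hsin : HasDerivAt (fun u => Real.sin (Ec u))
        (Real.cos (Ec t) * (κ / (1 - e * Real.cos (Ec t)))) t :=
      (Real.hasDerivAt_sin (Ec t)).comp t (hEc t)
    have hcos : HasDerivAt (fun u => Real.cos (Ec u))
        (-Real.sin (Ec t) * (κ / (1 - e * Real.cos (Ec t)))) t :=
      (Real.hasDerivAt_cos (Ec t)).comp t (hEc t)
    have hdenD : HasDerivAt (fun u => 1 - e * Real.cos (Ec u))
        (-(e * (-Real.sin (Ec t) * (κ / (1 - e * Real.cos (Ec t)))))) t :=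
      (hcos.const_mul e).const_sub 1
    have h := ((hcos.const_mul (b' / 2 * κ)).div hdenD hd)
    refine h.congr_deriv (Eq.symm ?_)
    rw [hX2def, hRRdef]
    simp only
    have hSC := Real.sin_sq_add_cos_sq (Ec t)
    field_simp
    linear_combination (Real.sin (Ec t)) * hκ2
  have hRRcont : Continuous fun t => RR (Ec t) := by
    rw [hRRdef]
    exact (continuous_const.sub
      (continuous_const.mul (Real.continuous_cos.comp hEccont))).div_const 2
  -- values of g and Ec at special points
  have hg0 : g 0 = 0 := by
    show (0 - e * Real.sin 0) / κ = 0
    simp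
  have hEc0 : Ec 0 = 0 := by
    have h := hEcg 0
    rwa [hg0] at h
  set ω₁ := g E₀ with hω₁def
  have hω₁pos : 0 < ω₁ := by
    have := hmono hE0pos
    rw [hg0] at this
    exact this
  have hEcω₁ : Ec ω₁ = E₀ := hEcg E₀
  have hgnegE0 : g (-E₀) = -ω₁ := by
    show (-E₀ - e * Real.sin (-E₀)) / κ = -((E₀ - e * Real.sin E₀) / κ)
    rw [Real.sin_neg]; ring
  have hEcnegω₁ : Ec (-ω₁) = -E₀ := by rw [← hgnegE0, hEcg]
  have hgπ : g π = π / κ := by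
    show (π - e * Real.sin π) / κ = π / κ
    rw [Real.sin_pi]; ring
  have hEcπ : Ec (π / κ) = π := by rw [← hgπ, hEcg]
  set ω₂ := π / κ - ω₁ with hω₂def
  have hω₂pos : 0 < ω₂ := by
    rw [hω₂def, ← hgπ, hω₁def]
    have := hmono hE0pi
    linarith
  have hg2π : g (2 * π - E₀) = 2 * π / κ - ω₁ := by
    show (2 * π - E₀ - e * Real.sin (2 * π - E₀)) / κ = 2 * π / κ - (E₀ - e * Real.sin E₀) / κ
    rw [Real.sin_two_pi_sub]; ring
  have hEc2π : Ec (2 * π / κ - ω₁) = 2 * π - E₀ := by rw [← hg2π, hEcg]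
  -- endpoint values
  have hX1E0 : X1 E₀ = σ * (R * c) := by
    rw [hX1def]
    simp only
    congr 1
    have h : Real.cos E₀ - e = 2 * (R * c) := by
      have h2 : e * (Real.cos E₀ - e) = e * (2 * (R * c)) := by
        rw [mul_sub, hecosE0]
        linear_combination -hquad
      exact mul_left_cancel₀ he0.ne' h2
    rw [h]; ring
  have hX2E0 : X2 E₀ = R * s := by
    have h1 : 0 ≤ X2 E₀ := by
      rw [hX2def]
      positivity
    have h2 : X2 E₀ ^ 2 = (R * s) ^ 2 := by
      rw [hX2def]
      simp only
      have hsin2 : Real.sin E₀ ^ 2 = 1 - Real.cos E₀ ^ 2 := by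
        linear_combination Real.sin_sq_add_cos_sq E₀
      have hc2 : (e * Real.cos E₀) ^ 2 = (1 - 2 * R) ^ 2 := by rw [hecosE0]
      have key : e ^ 2 * ((b' / 2 * Real.sin E₀) ^ 2) = e ^ 2 * ((R * s) ^ 2) := by
        have expand : e ^ 2 * ((b' / 2 * Real.sin E₀) ^ 2) =
            (1 - e ^ 2) * (e ^ 2 - e ^ 2 * Real.cos E₀ ^ 2) / 4 := by
          linear_combination (e ^ 2 * Real.sin E₀ ^ 2 / 4) * hb'2 +
            ((1 - e ^ 2) * e ^ 2 / 4) * hsin2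
        rw [expand]
        linear_combination (-(1 - e ^ 2) / 4) * hc2 +
          ((2 * R * c * e + 1 - 2 * R - e ^ 2) / 4) * hquad +
          (-(e ^ 2 * R ^ 2)) * hsc
      exact mul_left_cancel₀ (pow_ne_zero 2 he0.ne') key
    rw [← Real.sqrt_sq h1, h2, Real.sqrt_sq (by positivity : (0:ℝ) ≤ R * s)]
  have hX1neg : ∀ E, X1 (-E) = X1 E := by
    intro E; rw [hX1def]; simp [Real.cos_neg]
  have hX2neg : ∀ E, X2 (-E) = -X2 E := by
    intro E; rw [hX2def]; simp [Real.sin_neg]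
  have hX12π : X1 (2 * π - E₀) = X1 E₀ := by
    rw [hX1def]; simp [Real.cos_two_pi_sub]
  have hX22π : X2 (2 * π - E₀) = -X2 E₀ := by
    rw [hX2def]; simp [Real.sin_two_pi_sub]
  -- radius comparisons
  have hRval : RR E₀ = R := by
    rw [hRRdef]
    simp only
    rw [hecosE0]; ring
  have hRRlt : ∀ u v : ℝ, Real.cos v < Real.cos u → RR u < RR v := by
    intro u v h
    show (1 - e * Real.cos u) / 2 < (1 - e * Real.cos v) / 2
    have h3 := mul_lt_mul_of_pos_left h he0
    linarith
  have hcosgt : ∀ u, -E₀ < u → u < E₀ → Real.cos E₀ < Real.cos u := by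
    intro u h1 h2
    have habs : |u| < E₀ := abs_lt.2 ⟨h1, h2⟩
    have h := Real.cos_lt_cos_of_nonneg_of_le_pi (abs_nonneg u) hE0pi.le habs
    rwa [Real.cos_abs] at h
  have hcoslt : ∀ u, E₀ < u → u < 2 * π - E₀ → Real.cos u < Real.cos E₀ := by
    intro u h1 h2
    rcases le_or_gt u π with h | h
    · exact Real.cos_lt_cos_of_nonneg_of_le_pi hE0pos.le h h1
    · have h3 : Real.cos u = Real.cos (2 * π - u) := (Real.cos_two_pi_sub u).symm
      rw [h3]
      exact Real.cos_lt_cos_of_nonneg_of_le_pi hE0pos.le (by linarith) (by linarith)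
  -- the interior solution
  obtain ⟨hsolx, hvelx, hnormx⟩ := mk_sol hω₁pos
    (fun t => X1 (Ec t)) (fun t => X2 (Ec t)) (fun t => V1 (Ec t)) (fun t => V2 (Ec t))
    (fun t => RR (Ec t)) hd1 hd2 hdv1 hdv2 hRRcont (fun t => hRRpos (Ec t))
    (fun t => hsqE (Ec t)) (fun t => henE (Ec t))
  -- the exterior solution
  have hτ : ∀ t : ℝ, HasDerivAt (fun u : ℝ => π / κ - u) (-1) t := by
    intro t
    simpa using (hasDerivAt_id t).const_sub (π / κ)
  have hd1y : ∀ t, HasDerivAt (fun u => X1 (Ec (π / κ - u))) (-V1 (Ec (π / κ - t))) t := by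
    intro t
    have h := (hd1 (π / κ - t)).comp t (hτ t)
    refine h.congr_deriv (Eq.symm ?_)
    all_goals simp [Function.comp]
    all_goals ring
  have hd2y : ∀ t, HasDerivAt (fun u => X2 (Ec (π / κ - u))) (-V2 (Ec (π / κ - t))) t := by
    intro t
    have h := (hd2 (π / κ - t)).comp t (hτ t)
    refine h.congr_deriv (Eq.symm ?_)
    all_goals simp [Function.comp]
    all_goals ring
  have hdv1y : ∀ t, HasDerivAt (fun u => -V1 (Ec (π / κ - u)))
      (-(X1 (Ec (π / κ - t))) / RR (Ec (π / κ - t)) ^ 3) t := by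
    intro t
    have h := ((hdv1 (π / κ - t)).comp t (hτ t)).neg
    refine h.congr_deriv (Eq.symm ?_)
    all_goals simp [Function.comp]
    all_goals ring
  have hdv2y : ∀ t, HasDerivAt (fun u => -V2 (Ec (π / κ - u)))
      (-(X2 (Ec (π / κ - t))) / RR (Ec (π / κ - t)) ^ 3) t := by
    intro t
    have h := ((hdv2 (π / κ - t)).comp t (hτ t)).neg
    refine h.congr_deriv (Eq.symm ?_)
    all_goals simp [Function.comp]
    all_goals ring
  have hRRconty : Continuous fun t => RR (Ec (π / κ - t)) :=
    hRRcont.comp (continuous_const.sub continuous_id)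
  obtain ⟨hsoly, hvely, hnormy⟩ := mk_sol hω₂pos
    (fun t => X1 (Ec (π / κ - t))) (fun t => X2 (Ec (π / κ - t)))
    (fun t => -V1 (Ec (π / κ - t))) (fun t => -V2 (Ec (π / κ - t)))
    (fun t => RR (Ec (π / κ - t))) hd1y hd2y hdv1y hdv2y hRRconty
    (fun t => hRRpos _) (fun t => hsqE _)
    (fun t => by simpa [neg_sq] using henE (Ec (π / κ - t)))
  refine ⟨ω₁, ω₂, fun t => pt (X1 (Ec t)) (X2 (Ec t)),
    fun t => pt (X1 (Ec (π / κ - t))) (X2 (Ec (π / κ - t))), hω₁pos, hω₂pos, ⟨hsolx, ?_, ?_⟩, ?_, ?_, ⟨hsoly, ?_, ?_⟩, ?_, ?_⟩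
  · -- interior left endpoint
    show pt (X1 (Ec (-ω₁))) (X2 (Ec (-ω₁))) = pt (σ * (R * c)) (-(R * s))
    rw [hEcnegω₁, hX1neg, hX2neg, hX1E0, hX2E0]
  · -- interior right endpoint
    show pt (X1 (Ec ω₁)) (X2 (Ec ω₁)) = pt (σ * (R * c)) (R * s)
    rw [hEcω₁, hX1E0, hX2E0]
  · -- interior angular momentum
    have h0mem : (0:ℝ) ∈ Icc (-ω₁) ω₁ := ⟨by linarith, by linarith⟩
    have hv0 := hvelx 0 h0mem
    have h1e : (0:ℝ) < 1 - e := by linarith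
    have hX10 : X1 (Ec 0) = σ * ((1 - e) / 2) := by
      rw [hEc0]
      show σ * ((Real.cos 0 - e) / 2) = σ * ((1 - e) / 2)
      rw [Real.cos_zero]
    have hX20 : X2 (Ec 0) = 0 := by
      rw [hEc0]
      show b' / 2 * Real.sin 0 = 0
      rw [Real.sin_zero, mul_zero]
    have hV10 : V1 (Ec 0) = 0 := by
      rw [hEc0]
      show σ * (-(κ / 2) * Real.sin 0 / (1 - e * Real.cos 0)) = 0
      rw [Real.sin_zero]
      ring
    have hV20 : V2 (Ec 0) = b' / 2 * κ / (1 - e) := by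
      rw [hEc0]
      show b' / 2 * κ * Real.cos 0 / (1 - e * Real.cos 0) = b' / 2 * κ / (1 - e)
      rw [Real.cos_zero]
      ring
    simp only [angMom, hv0, pt_zero, pt_one, hX10, hX20, hV10, hV20]
    have hkey : σ * (σ * ((1 - e) / 2) * (b' / 2 * κ / (1 - e)) - 0 * 0) =
        σ ^ 2 * ((1 - e) / 2 * (b' / 2 * κ / (1 - e))) := by ring
    rw [hkey, hσ2, one_mul]
    exact mul_pos (by linarith) (div_pos (mul_pos (by linarith) hκ0) h1e)
  · -- interior radius bound
    intro t ht
    have h1 : -E₀ < Ec t := by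
      rw [← hEcnegω₁]; exact hEcmono ht.1
    have h2 : Ec t < E₀ := by
      rw [← hEcω₁]; exact hEcmono ht.2
    have h := hRRlt (Ec t) E₀ (hcosgt (Ec t) h1 h2)
    rw [hRval] at h
    show ‖(pt (X1 (Ec t)) (X2 (Ec t)) : E2)‖ < R
    rw [hnormx t]
    exact h
  · -- exterior left endpoint
    show pt (X1 (Ec (π / κ - -ω₂))) (X2 (Ec (π / κ - -ω₂))) = pt (σ * (R * c)) (-(R * s))
    have harg : π / κ - -ω₂ = 2 * π / κ - ω₁ := by rw [hω₂def]; ring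
    rw [harg, hEc2π, hX12π, hX22π, hX1E0, hX2E0]
  · -- exterior right endpoint
    show pt (X1 (Ec (π / κ - ω₂))) (X2 (Ec (π / κ - ω₂))) = pt (σ * (R * c)) (R * s)
    have harg : π / κ - ω₂ = ω₁ := by rw [hω₂def]; ring
    rw [harg, hEcω₁, hX1E0, hX2E0]
  · -- exterior angular momentum
    have h0mem : (0:ℝ) ∈ Icc (-ω₂) ω₂ := ⟨by linarith, by linarith⟩
    have hv0 := hvely 0 h0mem
    have h1e : (0:ℝ) < 1 + e := by linarith
    have hEcπ0 : Ec (π / κ - 0) = π := by rw [sub_zero, hEcπ]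
    have hX1π : X1 (Ec (π / κ - 0)) = σ * (-(1 + e) / 2) := by
      rw [hEcπ0]
      show σ * ((Real.cos π - e) / 2) = σ * (-(1 + e) / 2)
      rw [Real.cos_pi]
      ring
    have hX2π : X2 (Ec (π / κ - 0)) = 0 := by
      rw [hEcπ0]
      show b' / 2 * Real.sin π = 0
      rw [Real.sin_pi, mul_zero]
    have hV1π : -V1 (Ec (π / κ - 0)) = 0 := by
      rw [hEcπ0]
      show -(σ * (-(κ / 2) * Real.sin π / (1 - e * Real.cos π))) = 0
      rw [Real.sin_pi]
      ring
    have hV2π : -V2 (Ec (π / κ - 0)) = b' / 2 * κ / (1 + e) := by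
      rw [hEcπ0]
      show -(b' / 2 * κ * Real.cos π / (1 - e * Real.cos π)) = b' / 2 * κ / (1 + e)
      rw [Real.cos_pi]
      ring_nf
    simp only [angMom, hv0, pt_zero, pt_one, hX1π, hX2π, hV1π, hV2π]
    have hkey : σ * (σ * (-(1 + e) / 2) * (b' / 2 * κ / (1 + e)) - 0 * 0) =
        -(σ ^ 2 * ((1 + e) / 2 * (b' / 2 * κ / (1 + e)))) := by ring
    rw [hkey, hσ2, one_mul]
    have : 0 < (1 + e) / 2 * (b' / 2 * κ / (1 + e)) :=
      mul_pos (by linarith) (div_pos (mul_pos (by linarith) hκ0) h1e)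
    linarith
  · -- exterior radius bound
    intro t ht
    have h2πκ : 2 * π / κ = π / κ + π / κ := by ring
    have h1 : E₀ < Ec (π / κ - t) := by
      rw [← hEcω₁]
      apply hEcmono
      have := ht.2
      rw [hω₂def] at this
      linarith
    have h2 : Ec (π / κ - t) < 2 * π - E₀ := by
      rw [← hEc2π]
      apply hEcmono
      have := ht.1
      rw [hω₂def] at this
      rw [h2πκ]
      linarith
    have h := hRRlt E₀ (Ec (π / κ - t)) (hcoslt _ h1 h2)
    rw [hRval] at h
    show R < ‖(pt (X1 (Ec (π / κ - t))) (X2 (Ec (π / κ - t))) : E2)‖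
    rw [hnormy t]
    exact h

/-- Existence of the four Keplerian arcs when |p| = |q| = R < 1/2 (Theorem teo-ex (i)). -/
theorem four_arcs_small_radius (R φ₀ : ℝ) (hR0 : 0 < R) (hR : R < 1/2)
    (hφ : φ₀ ∈ Ioo 0 π)
    (p q : E2) (hp : p = pt (R * cos φ₀) (-(R * sin φ₀)))
    (hq : q = pt (R * cos φ₀) (R * sin φ₀)) :
    ∃ (ω₁ ω₂ ω₃ ω₄ : ℝ) (xintp xintm xextp xextm : ℝ → E2),
      0 < ω₁ ∧ 0 < ω₂ ∧ 0 < ω₃ ∧ 0 < ω₄ ∧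
      IsKeplerSolPQ ω₁ p q xintp ∧ 0 < angMom ω₁ xintp ∧
        (∀ t ∈ Ioo (-ω₁) ω₁, ‖xintp t‖ < R) ∧
      IsKeplerSolPQ ω₂ p q xintm ∧ angMom ω₂ xintm < 0 ∧
        (∀ t ∈ Ioo (-ω₂) ω₂, ‖xintm t‖ < R) ∧
      IsKeplerSolPQ ω₃ p q xextp ∧ 0 < angMom ω₃ xextp ∧
        (∀ t ∈ Ioo (-ω₃) ω₃, R < ‖xextp t‖) ∧
      IsKeplerSolPQ ω₄ p q xextm ∧ angMom ω₄ xextm < 0 ∧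
        (∀ t ∈ Ioo (-ω₄) ω₄, R < ‖xextm t‖) := by
  obtain ⟨ωa, ωb, x1, x4, hωa, hωb, hsol1, hm1, hint1, hsol4, hm4, hext4⟩ :=
    arcs_core R φ₀ 1 hR0 hR hφ (Or.inl rfl)
  have hφ' : π - φ₀ ∈ Ioo 0 π := ⟨by linarith [hφ.2], by linarith [hφ.1]⟩
  obtain ⟨ωc, ωd, x2, x3, hωc, hωd, hsol2, hm2, hint2, hsol3, hm3, hext3⟩ :=
    arcs_core R (π - φ₀) (-1) hR0 hR hφ' (Or.inr rfl)
  have hp1 : pt (1 * (R * Real.cos φ₀)) (-(R * Real.sin φ₀)) = p := by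
    rw [hp]; exact pt_congr (by ring) rfl
  have hq1 : pt (1 * (R * Real.cos φ₀)) (R * Real.sin φ₀) = q := by
    rw [hq]; exact pt_congr (by ring) rfl
  have hp2 : pt (-1 * (R * Real.cos (π - φ₀))) (-(R * Real.sin (π - φ₀))) = p := by
    rw [hp]
    exact pt_congr (by rw [Real.cos_pi_sub]; ring) (by rw [Real.sin_pi_sub])
  have hq2 : pt (-1 * (R * Real.cos (π - φ₀))) (R * Real.sin (π - φ₀)) = q := by
    rw [hq]
    exact pt_congr (by rw [Real.cos_pi_sub]; ring) (by rw [Real.sin_pi_sub])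
  rw [hp1, hq1] at hsol1 hsol4
  rw [hp2, hq2] at hsol2 hsol3
  exact ⟨ωa, ωc, ωd, ωb, x1, x2, x3, x4, hωa, hωc, hωd, hωb,
    hsol1, by linarith, hint1,
    hsol2, by linarith, hint2,
    hsol3, by linarith, hext3,
    hsol4, by linarith, hext4⟩
end
end

section
/- Let 1/2<R<1 and φ₀∈(0,π) with R sin φ₀ > 1−R, and let p=(R cos φ₀, −R sin φ₀), q=(R cos φ₀, R sin φ₀). Then there is no ω>0 for which problem (K) on [−ω,ω] with endpoints p,q admits a solution. -/
noncomputable section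
open Set Real Filter
open scoped RealInnerProductSpace
open scoped Topology

lemma pt_norm (a b : ℝ) : ‖pt a b‖ = √(a^2 + b^2) := by
  simp [pt, EuclideanSpace.norm_eq, Fin.sum_univ_two, sq_abs]

lemma pt_sub (a b c d : ℝ) : pt a b - pt c d = pt (a-c) (b-d) := by
  simp only [pt]
  ext i
  fin_cases i <;> simp

lemma focus_sq (X V : E2) (hX : X ≠ 0) (hw : ‖V‖ ^ 2 = 2 * ‖X‖⁻¹ - 2) :
    ‖X + ((‖V‖ ^ 2 - ‖X‖⁻¹) • X - ⟪X, V⟫ • V)‖ ^ 2 = (1 - ‖X‖) ^ 2 := by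
  have hr : (0 : ℝ) < ‖X‖ := norm_pos_iff.mpr hX
  have hexp : X + ((‖V‖ ^ 2 - ‖X‖⁻¹) • X - ⟪X, V⟫ • V)
      = (1 + (‖V‖ ^ 2 - ‖X‖⁻¹)) • X - ⟪X, V⟫ • V := by module
  rw [hexp, norm_sub_sq_real, norm_smul, norm_smul, real_inner_smul_left,
    real_inner_smul_right, mul_pow, mul_pow, Real.norm_eq_abs, Real.norm_eq_abs,
    sq_abs, sq_abs, hw]
  field_simp
  ring

lemma lrl_sum_zero (X V : E2) (hX : X ≠ 0) :
    ((⟪V, -(‖X‖ ^ 3)⁻¹ • X⟫ + ⟪-(‖X‖ ^ 3)⁻¹ • X, V⟫) - (-(⟪X, V⟫ / ‖X‖) / ‖X‖ ^ 2)) • X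
      + (‖V‖ ^ 2 - ‖X‖⁻¹) • V
      - ((⟪X, -(‖X‖ ^ 3)⁻¹ • X⟫ + ⟪V, V⟫) • V + ⟪X, V⟫ • (-(‖X‖ ^ 3)⁻¹ • X)) = 0 := by
  have hr : (0 : ℝ) < ‖X‖ := norm_pos_iff.mpr hX
  simp only [real_inner_smul_left, real_inner_smul_right, real_inner_self_eq_norm_sq,
    real_inner_comm V X]
  match_scalars <;> field_simp <;> ring

lemma kepler_focus {ω : ℝ} {x : ℝ → E2} (h : IsKeplerSol ω x) :
    ∃ A : E2, ‖x (-ω) + A‖ = 1 - ‖x (-ω)‖ ∧ ‖x ω + A‖ = 1 - ‖x ω‖ := by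
  obtain ⟨hω, hC2, hne, hode, hE⟩ := h
  have hlt : -ω < ω := by linarith
  set I := Icc (-ω) ω with hIdef
  have hUD : UniqueDiffOn ℝ I := uniqueDiffOn_Icc hlt
  set v := vel ω x with hvdef
  have hxd : DifferentiableOn ℝ x I := hC2.differentiableOn (by norm_num)
  have hvC1 : ContDiffOn ℝ 1 v I := hC2.derivWithin hUD (by norm_num)
  have hvd : DifferentiableOn ℝ v I := hvC1.differentiableOn (by norm_num)
  set A : ℝ → E2 := fun t => (‖v t‖ ^ 2 - ‖x t‖⁻¹) • x t - ⟪x t, v t⟫ • v t with hAdef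
  -- the norm identity, pointwise on I
  have hnormid : ∀ t ∈ I, ‖x t + A t‖ = 1 - ‖x t‖ := by
    intro t ht
    have hrpos : (0 : ℝ) < ‖x t‖ := norm_pos_iff.mpr (hne t ht)
    have hEn := hE t ht
    have hw : ‖v t‖ ^ 2 = 2 * ‖x t‖⁻¹ - 2 := by rw [hvdef]; linarith
    have hmul : ‖x t‖ * ‖x t‖⁻¹ = 1 := mul_inv_cancel₀ hrpos.ne'
    have hr1 : ‖x t‖ ≤ 1 := by nlinarith [sq_nonneg ‖v t‖, sq_nonneg ‖vel ω x t‖]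
    have hsq : ‖x t + A t‖ ^ 2 = (1 - ‖x t‖) ^ 2 := focus_sq (x t) (v t) (hne t ht) hw
    calc ‖x t + A t‖ = √(‖x t + A t‖ ^ 2) := (Real.sqrt_sq (norm_nonneg _)).symm
      _ = √((1 - ‖x t‖) ^ 2) := by rw [hsq]
      _ = 1 - ‖x t‖ := Real.sqrt_sq (by linarith)
  -- A has zero derivative on the open interval
  have hA0 : ∀ t ∈ Ioo (-ω) ω, HasDerivAt A 0 t := by
    intro t ht
    have htI : t ∈ I := Ioo_subset_Icc_self ht
    have hnx : x t ≠ 0 := hne t htI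
    have hrpos : (0 : ℝ) < ‖x t‖ := norm_pos_iff.mpr hnx
    have hmem : I ∈ 𝓝 t := Icc_mem_nhds ht.1 ht.2
    have hx' : HasDerivAt x (v t) t := ((hxd t htI).hasDerivWithinAt).hasDerivAt hmem
    have hv' : HasDerivAt v (-(‖x t‖ ^ 3)⁻¹ • x t) t := by
      have h1 := ((hvd t htI).hasDerivWithinAt).hasDerivAt hmem
      rwa [show derivWithin v I t = -(‖x t‖ ^ 3)⁻¹ • x t from hode t ht] at h1
    have hinner_xx : HasDerivAt (fun s => ⟪x s, x s⟫) (2 * ⟪x t, v t⟫) t := by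
      have h2 := hx'.inner ℝ hx'
      rw [real_inner_comm (x t) (v t), ← two_mul] at h2
      exact h2
    have hnrm : HasDerivAt (fun s => ‖x s‖) (⟪x t, v t⟫ / ‖x t‖) t := by
      have hpos : (0:ℝ) < ⟪x t, x t⟫ := by
        rw [real_inner_self_eq_norm_sq]; positivity
      have h2 : HasDerivAt (fun s => √(⟪x s, x s⟫))
          (1 / (2 * √(⟪x t, x t⟫)) * (2 * ⟪x t, v t⟫)) t :=
        (Real.hasDerivAt_sqrt hpos.ne').comp t hinner_xx
      have hfun : (fun s => √(⟪x s, x s⟫)) = fun s => ‖x s‖ := by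
        funext s; rw [real_inner_self_eq_norm_sq, Real.sqrt_sq (norm_nonneg _)]
      rw [hfun] at h2
      convert h2 using 1
      rw [real_inner_self_eq_norm_sq, Real.sqrt_sq (norm_nonneg _)]
      field_simp
    have hinv : HasDerivAt (fun s => ‖x s‖⁻¹)
        (-(⟪x t, v t⟫ / ‖x t‖) / ‖x t‖ ^ 2) t := hnrm.inv hrpos.ne'
    have hnv : HasDerivAt (fun s => ‖v s‖ ^ 2)
        (⟪v t, -(‖x t‖ ^ 3)⁻¹ • x t⟫ + ⟪-(‖x t‖ ^ 3)⁻¹ • x t, v t⟫) t := by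
      have h3 := hv'.inner ℝ hv'
      have hfun : (fun s => ‖v s‖ ^ 2) = fun s => ⟪v s, v s⟫ := by
        funext s; rw [real_inner_self_eq_norm_sq]
      rw [hfun]; exact h3
    have hf1 := hnv.sub hinv
    have hf2 : HasDerivAt (fun s => ⟪x s, v s⟫)
        (⟪x t, -(‖x t‖ ^ 3)⁻¹ • x t⟫ + ⟪v t, v t⟫) t := hx'.inner ℝ hv'
    have hA' := (hf1.smul hx').sub (hf2.smul hv')
    have hkey := lrl_sum_zero (x t) (v t) hnx
    refine hA'.congr_deriv ?_
    rw [← hkey, Pi.sub_apply]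
    module
  -- A is constant on the open interval
  have h0mem : (0 : ℝ) ∈ Ioo (-ω) ω := ⟨by linarith, hω⟩
  have hconst : ∀ s ∈ Ioo (-ω) ω, ∀ t ∈ Ioo (-ω) ω, s ≤ t → A t = A s := by
    intro s hs t ht hst
    have hsub : Icc s t ⊆ Ioo (-ω) ω := fun u hu => ⟨lt_of_lt_of_le hs.1 hu.1,
      lt_of_le_of_lt hu.2 ht.2⟩
    exact constant_of_has_deriv_right_zero
      (fun u hu => ((hA0 u (hsub hu)).continuousAt).continuousWithinAt)
      (fun u hu => ((hA0 u (hsub (Ico_subset_Icc_self hu))).hasDerivWithinAt))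
      t (right_mem_Icc.mpr hst)
  have hconst' : ∀ t ∈ Ioo (-ω) ω, A t = A 0 := by
    intro t ht
    rcases le_total t 0 with h | h
    · exact (hconst t ht 0 h0mem h).symm
    · exact hconst 0 h0mem t ht h
  -- continuity of A on I
  have hAc : ContinuousOn A I := by
    have hxc : ContinuousOn x I := hC2.continuousOn
    have hvc : ContinuousOn v I := hvC1.continuousOn
    exact ((((hvc.norm.pow 2).sub (hxc.norm.inv₀
      (fun t ht => norm_ne_zero_iff.mpr (hne t ht)))).smul hxc).sub
      ((hxc.inner (𝕜 := ℝ) hvc).smul hvc))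
  -- endpoint values by limits
  have hend : ∀ t₀ ∈ I, A t₀ = A 0 := by
    intro t₀ ht₀
    have hclos : t₀ ∈ closure (Ioo (-ω) ω) := by
      rw [closure_Ioo hlt.ne]; exact ht₀
    have hnebot : (𝓝[Ioo (-ω) ω] t₀).NeBot := mem_closure_iff_nhdsWithin_neBot.mp hclos
    have h1 : Tendsto A (𝓝[Ioo (-ω) ω] t₀) (𝓝 (A t₀)) :=
      (hAc t₀ ht₀).mono_left (nhdsWithin_mono _ Ioo_subset_Icc_self)
    have h2 : Tendsto A (𝓝[Ioo (-ω) ω] t₀) (𝓝 (A 0)) := by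
      refine Tendsto.congr' ?_ tendsto_const_nhds
      filter_upwards [self_mem_nhdsWithin] with u hu
      exact (hconst' u hu).symm
    exact tendsto_nhds_unique h1 h2
  refine ⟨A 0, ?_, ?_⟩
  · rw [← hend (-ω) (left_mem_Icc.mpr hlt.le)]
    exact hnormid (-ω) (left_mem_Icc.mpr hlt.le)
  · rw [← hend ω (right_mem_Icc.mpr hlt.le)]
    exact hnormid ω (right_mem_Icc.mpr hlt.le)

/-- Nonexistence of Keplerian arcs when 1/2 < |p| = |q| = R < 1 and R sin φ₀ > 1 - R
(Theorem teo-ex (iii), nonexistence part). -/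
theorem no_arcs_large_radius (R φ₀ : ℝ) (hR1 : 1/2 < R) (hR2 : R < 1)
    (hφ : φ₀ ∈ Ioo 0 π) (hcond : 1 - R < R * sin φ₀)
    (p q : E2) (hp : p = pt (R * cos φ₀) (-(R * sin φ₀)))
    (hq : q = pt (R * cos φ₀) (R * sin φ₀)) :
    ¬ ∃ (ω : ℝ) (x : ℝ → E2), IsKeplerSolPQ ω p q x := by
  rintro ⟨ω, x, hsol, hxp, hxq⟩
  obtain ⟨A, h1, h2⟩ := kepler_focus hsol
  rw [hxp] at h1
  rw [hxq] at h2
  have hsin : 0 < sin φ₀ := sin_pos_of_pos_of_lt_pi hφ.1 hφ.2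
  have hR0 : (0:ℝ) < R := by linarith
  have hpR : ‖p‖ = R := by
    rw [hp]
    simp only [pt_norm]
    rw [show (R * cos φ₀)^2 + (-(R * sin φ₀))^2 = R^2 by
      have := sin_sq_add_cos_sq φ₀; nlinarith]
    exact Real.sqrt_sq hR0.le
  have hqR : ‖q‖ = R := by
    rw [hq]
    simp only [pt_norm]
    rw [show (R * cos φ₀)^2 + (R * sin φ₀)^2 = R^2 by
      have := sin_sq_add_cos_sq φ₀; nlinarith]
    exact Real.sqrt_sq hR0.le
  have hpq : ‖p - q‖ = 2 * (R * sin φ₀) := by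
    rw [hp, hq, pt_sub, pt_norm]
    rw [show (R * cos φ₀ - R * cos φ₀)^2 + (-(R * sin φ₀) - R * sin φ₀)^2
        = (2 * (R * sin φ₀))^2 by ring]
    exact Real.sqrt_sq (by positivity)
  have htri : ‖p - q‖ ≤ ‖p + A‖ + ‖q + A‖ := by
    have : p - q = (p + A) - (q + A) := by abel
    rw [this]
    exact norm_sub_le _ _
  rw [hpq, h1, h2, hpR, hqR] at htri
  linarith
end
end

section
/- Let 1/2<R<1 and φ₀∈(0, arcsin((1−R)/R)), and let p=(R cos φ₀, −R sin φ₀), q=(R cos φ₀, R sin φ₀). Then there exist four solutions x_{int,1}, x_{int,2}, x_{ext,1}, x_{ext,2} of problem (K) (each on its own interval [−ω_i,ω_i]) with endpoints p,q such that: c_{x_{int,i}}<0 and |x_{int,i}(t)|<R for all t in the corresponding open intervals (i=1,2); c_{x_{ext,i}}>0 and |x_{ext,i}(t)|>R for all t in the corresponding open intervals (i=1,2); and |x_{ext,1}(0)|<|x_{ext,2}(0)| and |x_{int,1}(0)|>|x_{int,2}(0)|. -/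
set_option maxHeartbeats 1600000


noncomputable section
open Set Real Filter
open scoped RealInnerProductSpace

namespace K4

def LL : (Fin 2 → ℝ) ≃L[ℝ] E2 := (EuclideanSpace.equiv (Fin 2) ℝ).symm

lemma pt_zero (a b : ℝ) : (pt a b) 0 = a := rfl
lemma pt_one (a b : ℝ) : (pt a b) 1 = b := rfl

lemma norm_pt_sq (a b : ℝ) : ‖pt a b‖ ^ 2 = a ^ 2 + b ^ 2 := by
  rw [EuclideanSpace.norm_eq]
  rw [Real.sq_sqrt (by positivity)]
  simp [pt, Fin.sum_univ_two, sq_abs]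

lemma norm_pt (a b : ℝ) : ‖pt a b‖ = Real.sqrt (a ^ 2 + b ^ 2) := by
  rw [EuclideanSpace.norm_eq]; simp [pt, Fin.sum_univ_two, sq_abs]

lemma smul_pt (c a b : ℝ) : c • pt a b = pt (c * a) (c * b) := by
  have : c • (![a,b] : Fin 2 → ℝ) = ![c*a, c*b] := by
    funext i; fin_cases i <;> simp
  show LL (c • ![a,b]) = _
  · rw [this]; rfl

lemma pt_injective {a b a' b' : ℝ} (h : pt a b = pt a' b') : a = a' ∧ b = b' := by
  constructor
  · have := congrFun (congrArg (fun v : E2 => (v : Fin 2 → ℝ)) h) 0; exact this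
  · have := congrFun (congrArg (fun v : E2 => (v : Fin 2 → ℝ)) h) 1; exact this

lemma hasDerivAt_pt {f g : ℝ → ℝ} {f' g' x : ℝ} (hf : HasDerivAt f f' x)
    (hg : HasDerivAt g g' x) : HasDerivAt (fun w => pt (f w) (g w)) (pt f' g') x := by
  have : HasDerivAt (fun w => ![f w, g w] : ℝ → (Fin 2 → ℝ)) ![f', g'] x := by
    rw [hasDerivAt_pi]; intro i; fin_cases i <;> simpa
  exact (LL.toContinuousLinearMap.hasFDerivAt.comp_hasDerivAt x this :)

lemma continuous_pt {f g : ℝ → ℝ} (hf : Continuous f) (hg : Continuous g) :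
    Continuous (fun w => pt (f w) (g w)) := by
  have : Continuous (fun w => ![f w, g w] : ℝ → (Fin 2 → ℝ)) := by
    apply continuous_pi; intro i; fin_cases i <;> simpa
  exact LL.continuous.comp this

/-! The ellipse with semimajor axis 1/2, eccentricity e, apoapsis on positive x-axis,
parametrized by eccentric anomaly. -/

def rh (e w : ℝ) : ℝ := 1 + e * Real.cos w
def tmap (e w : ℝ) : ℝ := (Real.sqrt 2 / 4) * (w + e * Real.sin w)
def XE (e w : ℝ) : E2 := pt ((Real.cos w + e)/2) (Real.sqrt (1 - e^2) * Real.sin w / 2)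
def VE (e w : ℝ) : E2 :=
  pt (-(Real.sqrt 2 * Real.sin w) / rh e w)
     (Real.sqrt 2 * Real.sqrt (1 - e^2) * Real.cos w / rh e w)
def AE (e w : ℝ) : E2 :=
  pt (-(4 * (Real.cos w + e)) / (rh e w)^3)
     (-(4 * Real.sqrt (1 - e^2) * Real.sin w) / (rh e w)^3)
def Wi (e : ℝ) : ℝ → ℝ := Function.invFun (tmap e)
def zc (e t : ℝ) : E2 := XE e (Wi e t)

variable {e : ℝ}

lemma rh_pos (he0 : 0 ≤ e) (he1 : e < 1) (w : ℝ) : 0 < rh e w := by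
  have h1 := Real.neg_one_le_cos w
  have h2 := Real.cos_le_one w
  unfold rh; nlinarith

lemma sq2_pos : (0:ℝ) < Real.sqrt 2 := Real.sqrt_pos.2 (by norm_num)
lemma sq2_sq : (Real.sqrt 2) ^ 2 = 2 := Real.sq_sqrt (by norm_num)

lemma hasDerivAt_tmap (w : ℝ) : HasDerivAt (tmap e) (Real.sqrt 2 / 4 * rh e w) w := by
  have h : HasDerivAt (fun w => w + e * Real.sin w) (1 + e * Real.cos w) w :=
    (hasDerivAt_id w).add ((Real.hasDerivAt_sin w).const_mul e)
  exact h.const_mul (Real.sqrt 2 / 4)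

lemma tmap_strictMono (he0 : 0 ≤ e) (he1 : e < 1) : StrictMono (tmap e) :=
  strictMono_of_deriv_pos (fun w => by
    rw [(hasDerivAt_tmap w).deriv]
    exact mul_pos (by positivity) (rh_pos he0 he1 w))

lemma tmap_surj (he0 : 0 ≤ e) (he1 : e < 1) : Function.Surjective (tmap e) := by
  have hc : Continuous (tmap e) := by
    unfold tmap; fun_prop
  apply hc.surjective
  · apply tendsto_atTop_mono (f := fun w => (Real.sqrt 2 / 4) * (w - 1))
    · intro w
      have h1 := Real.neg_one_le_sin w
      have h3 : e * (-1) ≤ e * Real.sin w := mul_le_mul_of_nonneg_left h1 he0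
      have h2 : (0:ℝ) < Real.sqrt 2 / 4 := by positivity
      unfold tmap; nlinarith
    · exact (tendsto_atTop_add_const_right _ (-1) tendsto_id).const_mul_atTop (by positivity)
  · apply tendsto_atBot_mono (f := fun w => (Real.sqrt 2 / 4) * (w + 1))
    · intro w
      have h1 := Real.sin_le_one w
      have h3 : e * Real.sin w ≤ e * 1 := mul_le_mul_of_nonneg_left h1 he0
      have h2 : (0:ℝ) < Real.sqrt 2 / 4 := by positivity
      unfold tmap; nlinarith
    · exact (tendsto_atBot_add_const_right _ 1 tendsto_id).const_mul_atBot (by positivity)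

lemma Wi_tmap (he0 : 0 ≤ e) (he1 : e < 1) (w : ℝ) : Wi e (tmap e w) = w :=
  Function.leftInverse_invFun (tmap_strictMono he0 he1).injective w

lemma tmap_Wi (he0 : 0 ≤ e) (he1 : e < 1) (t : ℝ) : tmap e (Wi e t) = t :=
  Function.invFun_eq (tmap_surj he0 he1 t)

lemma Wi_strictMono (he0 : 0 ≤ e) (he1 : e < 1) : StrictMono (Wi e) := by
  intro a b hab
  by_contra h
  push_neg at h
  have := (tmap_strictMono he0 he1).monotone h
  rw [tmap_Wi he0 he1, tmap_Wi he0 he1] at this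
  exact absurd this (not_le.2 hab)

lemma Wi_surj (he0 : 0 ≤ e) (he1 : e < 1) : Function.Surjective (Wi e) :=
  fun w => ⟨tmap e w, Wi_tmap he0 he1 w⟩

lemma Wi_continuous (he0 : 0 ≤ e) (he1 : e < 1) : Continuous (Wi e) :=
  ((Wi_strictMono he0 he1).monotone).continuous_of_surjective (Wi_surj he0 he1)

lemma hasDerivAt_Wi (he0 : 0 ≤ e) (he1 : e < 1) (t : ℝ) :
    HasDerivAt (Wi e) ((Real.sqrt 2 / 4 * rh e (Wi e t))⁻¹) t := by
  apply HasDerivAt.of_local_left_inverse ((Wi_continuous he0 he1).continuousAt)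
    (hasDerivAt_tmap (Wi e t))
    (ne_of_gt (mul_pos (by positivity) (rh_pos he0 he1 _)))
  exact Eventually.of_forall (tmap_Wi he0 he1)



lemma pt_ext {a b a' b' : ℝ} (h1 : a = a') (h2 : b = b') : pt a b = pt a' b' := by rw [h1, h2]

lemma hss : Real.sqrt 2 * Real.sqrt 2 = 2 := Real.mul_self_sqrt (by norm_num)

lemma s_sq (he0 : 0 ≤ e) (he1 : e < 1) : (Real.sqrt (1 - e^2))^2 = 1 - e^2 :=
  Real.sq_sqrt (by nlinarith)

lemma norm_XE (he0 : 0 ≤ e) (he1 : e < 1) (w : ℝ) : ‖XE e w‖ = rh e w / 2 := by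
  have hs : (Real.sqrt (1 - e^2))^2 = 1 - e^2 := s_sq he0 he1
  have hsc := Real.sin_sq_add_cos_sq w
  have h : ((Real.cos w + e)/2)^2 + (Real.sqrt (1 - e^2) * Real.sin w / 2)^2
      = (rh e w / 2)^2 := by
    unfold rh
    linear_combination (Real.sin w ^ 2 / 4) * hs + ((1 - e^2)/4) * hsc
  rw [XE, norm_pt, h, Real.sqrt_sq (by linarith [rh_pos he0 he1 w])]

lemma norm_VE_sq (he0 : 0 ≤ e) (he1 : e < 1) (w : ℝ) :
    ‖VE e w‖^2 = 2 * (1 - e * Real.cos w) / rh e w := by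
  have hs : (Real.sqrt (1 - e^2))^2 = 1 - e^2 := s_sq he0 he1
  have hsc := Real.sin_sq_add_cos_sq w
  have hρ := rh_pos he0 he1 w
  rw [VE, norm_pt_sq]
  have hρ' : rh e w ≠ 0 := ne_of_gt hρ
  field_simp
  unfold rh at *
  linear_combination (Real.sin w^2 + (Real.sqrt (1-e^2))^2 * Real.cos w^2) * hss
    + (2 * Real.cos w^2) * hs + 2 * hsc

lemma energy (he0 : 0 ≤ e) (he1 : e < 1) (w : ℝ) :
    (1/2 : ℝ) * ‖VE e w‖^2 - ‖XE e w‖⁻¹ = -1 := by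
  rw [norm_VE_sq he0 he1, norm_XE he0 he1]
  have hρ := rh_pos he0 he1 w
  unfold rh at *
  field_simp
  ring

lemma XE_ne_zero (he0 : 0 ≤ e) (he1 : e < 1) (w : ℝ) : XE e w ≠ 0 := by
  intro h
  have : ‖XE e w‖ = 0 := by rw [h]; simp
  rw [norm_XE he0 he1] at this
  have := rh_pos he0 he1 w
  linarith

lemma AE_eq (he0 : 0 ≤ e) (he1 : e < 1) (w : ℝ) :
    AE e w = -(‖XE e w‖^3)⁻¹ • XE e w := by
  have hρ := rh_pos he0 he1 w
  rw [norm_XE he0 he1, XE, AE, smul_pt]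
  exact pt_ext (by field_simp; ring) (by field_simp; ring)

lemma hasDerivAt_XE (w : ℝ) :
    HasDerivAt (XE e) (pt (-Real.sin w / 2) (Real.sqrt (1 - e^2) * Real.cos w / 2)) w := by
  apply hasDerivAt_pt
  · simpa using ((Real.hasDerivAt_cos w).add_const e).div_const 2
  · simpa [mul_div_assoc] using ((Real.hasDerivAt_sin w).const_mul (Real.sqrt (1 - e^2))).div_const 2

lemma hasDerivAt_VE (he0 : 0 ≤ e) (he1 : e < 1) (w : ℝ) :
    HasDerivAt (VE e)
      (pt (-(Real.sqrt 2 * (Real.cos w + e)) / (rh e w)^2)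
          (-(Real.sqrt 2 * Real.sqrt (1 - e^2) * Real.sin w) / (rh e w)^2)) w := by
  have hρ := rh_pos he0 he1 w
  have hρ' : rh e w ≠ 0 := ne_of_gt hρ
  have hρ2 : 1 + e * Real.cos w ≠ 0 := by simpa [rh] using hρ'
  have hrh : HasDerivAt (rh e) (-(e * Real.sin w)) w := by
    have h := ((Real.hasDerivAt_cos w).const_mul e).const_add 1
    rw [mul_neg] at h
    exact h
  have hsc := Real.sin_sq_add_cos_sq w
  apply hasDerivAt_pt
  · have h1 : HasDerivAt (fun w => -(Real.sqrt 2 * Real.sin w)) (-(Real.sqrt 2 * Real.cos w)) w :=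
      (((Real.hasDerivAt_sin w).const_mul (Real.sqrt 2)).neg)
    have h2 := h1.div hrh hρ'
    refine h2.congr_deriv (Eq.symm ?_)
    congr 1
    unfold rh
    linear_combination (Real.sqrt 2 * e) * hsc
  · have h1 : HasDerivAt (fun w => Real.sqrt 2 * Real.sqrt (1 - e^2) * Real.cos w)
        (Real.sqrt 2 * Real.sqrt (1 - e^2) * (-Real.sin w)) w :=
      ((Real.hasDerivAt_cos w).const_mul _)
    have h2 := h1.div hrh hρ'
    refine h2.congr_deriv (Eq.symm ?_)
    unfold rh
    field_simp
    ring

lemma hasDerivAt_zc (he0 : 0 ≤ e) (he1 : e < 1) (t : ℝ) :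
    HasDerivAt (zc e) (VE e (Wi e t)) t := by
  have h := (hasDerivAt_XE (e := e) (Wi e t)).scomp t (hasDerivAt_Wi he0 he1 t)
  refine h.congr_deriv (Eq.symm ?_)
  set w := Wi e t
  have hρ := rh_pos he0 he1 w
  have hρ' : rh e w ≠ 0 := ne_of_gt hρ
  have h2 : Real.sqrt 2 ≠ 0 := by positivity
  rw [smul_pt, VE]
  refine pt_ext ?_ ?_
  · field_simp
    linear_combination (-2 * Real.sin w) * hss
  · field_simp
    linear_combination (2 * Real.sqrt (1 - e^2) * Real.cos w) * hss

lemma hasDerivAt_vz (he0 : 0 ≤ e) (he1 : e < 1) (t : ℝ) :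
    HasDerivAt (fun t => VE e (Wi e t)) (AE e (Wi e t)) t := by
  have h := (hasDerivAt_VE he0 he1 (Wi e t)).scomp t (hasDerivAt_Wi he0 he1 t)
  refine h.congr_deriv (Eq.symm ?_)
  set w := Wi e t
  have hρ := rh_pos he0 he1 w
  have hρ' : rh e w ≠ 0 := ne_of_gt hρ
  have h2 : Real.sqrt 2 ≠ 0 := by positivity
  rw [smul_pt, AE]
  refine pt_ext ?_ ?_ <;> field_simp


lemma contDiff_zc (he0 : 0 ≤ e) (he1 : e < 1) : ContDiff ℝ 2 (zc e) := by
  have hd1 : Differentiable ℝ (zc e) := fun t => (hasDerivAt_zc he0 he1 t).differentiableAt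
  have hdz : deriv (zc e) = fun t => VE e (Wi e t) :=
    funext fun t => (hasDerivAt_zc he0 he1 t).deriv
  have hd2 : Differentiable ℝ (fun t => VE e (Wi e t)) :=
    fun t => (hasDerivAt_vz he0 he1 t).differentiableAt
  have hdz2 : deriv (fun t => VE e (Wi e t)) = fun t => AE e (Wi e t) :=
    funext fun t => (hasDerivAt_vz he0 he1 t).deriv
  have hca : Continuous (fun t => AE e (Wi e t)) := by
    have hWi := Wi_continuous he0 he1
    have hrh : Continuous (fun t => rh e (Wi e t)) := by unfold rh; fun_prop
    apply continuous_pt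
    · apply Continuous.div
      · fun_prop
      · fun_prop
      · exact fun t => pow_ne_zero _ (ne_of_gt (rh_pos he0 he1 _))
    · apply Continuous.div
      · fun_prop
      · fun_prop
      · exact fun t => pow_ne_zero _ (ne_of_gt (rh_pos he0 he1 _))
  have h2 : (2 : WithTop ℕ∞) = 1 + 1 := by norm_num
  rw [h2, contDiff_succ_iff_deriv]
  refine ⟨hd1, by simp, ?_⟩
  rw [hdz, contDiff_one_iff_deriv]
  exact ⟨hd2, by rw [hdz2]; exact hca⟩

section arc
variable {R φ₀ : ℝ}

lemma hasDerivAt_arc (he0 : 0 ≤ e) (he1 : e < 1) (c₀ ε : ℝ) (t : ℝ) :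
    HasDerivAt (fun t => zc e (c₀ + ε * t)) (ε • VE e (Wi e (c₀ + ε * t))) t := by
  have haff : HasDerivAt (fun t : ℝ => c₀ + ε * t) ε t := by
    simpa using ((hasDerivAt_id t).const_mul ε).const_add c₀
  have h := (hasDerivAt_zc he0 he1 (c₀ + ε * t)).scomp t haff
  exact h

lemma vel_arc (he0 : 0 ≤ e) (he1 : e < 1) (c₀ ε ω : ℝ) (hω : 0 < ω) :
    ∀ t ∈ Icc (-ω) ω, vel ω (fun t => zc e (c₀ + ε * t)) t = ε • VE e (Wi e (c₀ + ε * t)) := by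
  intro t ht
  rw [vel, (hasDerivAt_arc he0 he1 c₀ ε t).differentiableAt.derivWithin
    (uniqueDiffOn_Icc (by linarith) t ht)]
  exact (hasDerivAt_arc he0 he1 c₀ ε t).deriv

lemma isKeplerSol_arc (he0 : 0 ≤ e) (he1 : e < 1) (c₀ ε ω : ℝ) (hε : ε = 1 ∨ ε = -1)
    (hω : 0 < ω) : IsKeplerSol ω (fun t => zc e (c₀ + ε * t)) := by
  have hε2 : ε * ε = 1 := by rcases hε with h | h <;> rw [h] <;> norm_num
  refine ⟨hω, ?_, ?_, ?_, ?_⟩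
  · exact (((contDiff_zc he0 he1).comp
      ((contDiff_const (c := c₀)).add ((contDiff_const (c := ε)).mul contDiff_id))).contDiffOn)
  · exact fun t _ => XE_ne_zero he0 he1 _
  · intro t ht
    have hIcc : t ∈ Icc (-ω) ω := Ioo_subset_Icc_self ht
    have hcongr : derivWithin (vel ω fun t => zc e (c₀ + ε * t)) (Icc (-ω) ω) t
        = derivWithin (fun s => ε • VE e (Wi e (c₀ + ε * s))) (Icc (-ω) ω) t :=
      derivWithin_congr (vel_arc he0 he1 c₀ ε ω hω) (vel_arc he0 he1 c₀ ε ω hω t hIcc)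
    have haff : HasDerivAt (fun t : ℝ => c₀ + ε * t) ε t := by
      simpa using ((hasDerivAt_id t).const_mul ε).const_add c₀
    have hder : HasDerivAt (fun s => ε • VE e (Wi e (c₀ + ε * s)))
        (AE e (Wi e (c₀ + ε * t))) t := by
      have h := (((hasDerivAt_vz he0 he1 (c₀ + ε * t)).scomp t haff).const_smul ε)
      refine h.congr_deriv ?_
      simp [smul_smul, hε2]
    rw [hcongr, hder.differentiableAt.derivWithin (uniqueDiffOn_Icc (by linarith) t hIcc),
      hder.deriv]
    rw [show (fun t => zc e (c₀ + ε * t)) t = XE e (Wi e (c₀ + ε * t)) from rfl,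
      norm_XE he0 he1]
    rw [AE_eq he0 he1, norm_XE he0 he1]
  · intro t ht
    rw [vel_arc he0 he1 c₀ ε ω hω t ht]
    have : ‖ε • VE e (Wi e (c₀ + ε * t))‖ = ‖VE e (Wi e (c₀ + ε * t))‖ := by
      rw [norm_smul]
      rcases hε with h | h <;> simp [h]
    rw [this]
    rw [show (fun t => zc e (c₀ + ε * t)) t = XE e (Wi e (c₀ + ε * t)) from rfl]
    exact energy he0 he1 _

end arc

lemma tmap_zero : tmap e 0 = 0 := by simp [tmap]
lemma tmap_neg (w : ℝ) : tmap e (-w) = -tmap e w := by simp [tmap]; ring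
lemma zc_tmap (he0 : 0 ≤ e) (he1 : e < 1) (w : ℝ) : zc e (tmap e w) = XE e w := by
  rw [zc, Wi_tmap he0 he1]

lemma build (R φ₀ e : ℝ) (hR1 : 1/2 < R) (hR2 : R < 1)
    (hs0 : 0 ≤ Real.sin φ₀) (he0 : 0 < e) (he1 : e < 1) (hgt : 2*R - 1 < e)
    (hroot : e^2 - 2*R*Real.cos φ₀*e + (2*R - 1) = 0) :
    ∃ ωi ωe xi xe, 0 < ωi ∧ 0 < ωe ∧
      IsKeplerSolPQ ωi (pt (R*Real.cos φ₀) (-(R*Real.sin φ₀)))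
        (pt (R*Real.cos φ₀) (R*Real.sin φ₀)) xi ∧
      angMom ωi xi < 0 ∧ (∀ t ∈ Ioo (-ωi) ωi, ‖xi t‖ < R) ∧ ‖xi 0‖ = (1-e)/2 ∧
      IsKeplerSolPQ ωe (pt (R*Real.cos φ₀) (-(R*Real.sin φ₀)))
        (pt (R*Real.cos φ₀) (R*Real.sin φ₀)) xe ∧
      0 < angMom ωe xe ∧ (∀ t ∈ Ioo (-ωe) ωe, R < ‖xe t‖) ∧ ‖xe 0‖ = (1+e)/2 := by
  have he0' : (0:ℝ) ≤ e := he0.le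
  have hR0 : (0:ℝ) < 2*R - 1 := by linarith
  have harg0 : 0 < (2*R-1)/e := by positivity
  have harg1 : (2*R-1)/e < 1 := (div_lt_one he0).2 hgt
  set W : ℝ := Real.arccos ((2*R-1)/e) with hW
  have hwcos : Real.cos W = (2*R-1)/e := Real.cos_arccos (by linarith) harg1.le
  have hw0 : 0 < W := Real.arccos_pos.2 harg1
  have hwpi2 : W < π/2 := Real.arccos_lt_pi_div_two.2 harg0
  have hwpi : W ≤ π := Real.arccos_le_pi _
  have hwlt : W < π := lt_of_lt_of_le hwpi2 (by linarith [Real.pi_pos])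
  have hsinW : Real.sin W = Real.sqrt (1 - ((2*R-1)/e)^2) := Real.sin_arccos _
  have hsinW0 : 0 < Real.sin W := Real.sin_pos_of_pos_of_lt_pi hw0 hwlt
  have hsq : (Real.sqrt (1 - e^2))^2 = 1 - e^2 := s_sq he0' he1
  have hsc := Real.sin_sq_add_cos_sq φ₀
  -- the key endpoint identities
  have hX1 : (Real.cos W + e)/2 = R * Real.cos φ₀ := by
    rw [hwcos]
    field_simp
    linear_combination hroot
  have hX2 : Real.sqrt (1 - e^2) * Real.sin W / 2 = R * Real.sin φ₀ := by
    have hss2 : (Real.sin W)^2 = 1 - ((2*R-1)/e)^2 := by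
      rw [hsinW, Real.sq_sqrt]
      nlinarith [harg0, harg1]
    have hsq2 : (Real.sqrt (1 - e^2) * Real.sin W / 2)^2 = (R * Real.sin φ₀)^2 := by
      rw [div_pow, mul_pow, hsq, hss2]
      field_simp
      linear_combination (-(2*R*Real.cos φ₀*e + e^2 + 2*R - 1)) * hroot + (-(4*R^2*e^2)) * hsc
    have h1 : 0 ≤ Real.sqrt (1 - e^2) * Real.sin W / 2 := by positivity
    have h2 : 0 ≤ R * Real.sin φ₀ := by positivity
    rw [← Real.sqrt_sq h1, hsq2, Real.sqrt_sq h2]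
  have hXW : XE e W = pt (R*Real.cos φ₀) (R*Real.sin φ₀) := by
    rw [XE]; exact pt_ext hX1 hX2
  have hXWn : XE e (-W) = pt (R*Real.cos φ₀) (-(R*Real.sin φ₀)) := by
    rw [XE, Real.cos_neg, Real.sin_neg]
    refine pt_ext hX1 ?_
    rw [← hX2]; ring
  have hXW2 : XE e (2*π - W) = pt (R*Real.cos φ₀) (-(R*Real.sin φ₀)) := by
    rw [XE]
    have hc2 : Real.cos (2*π - W) = Real.cos W := by
      rw [Real.cos_sub]; simp [Real.cos_two_pi, Real.sin_two_pi]
    have hs2 : Real.sin (2*π - W) = -Real.sin W := by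
      rw [Real.sin_sub]; simp [Real.cos_two_pi, Real.sin_two_pi]
    rw [hc2, hs2]
    refine pt_ext hX1 ?_
    rw [← hX2]; ring
  -- time values
  set ωe : ℝ := tmap e W with hωe
  have hωe0 : 0 < ωe := by
    have := tmap_strictMono he0' he1 hw0
    rwa [tmap_zero] at this
  set c₀ : ℝ := tmap e π with hc₀
  set ωi : ℝ := c₀ - tmap e W with hωi
  have hωi0 : 0 < ωi := by
    have := tmap_strictMono he0' he1 hwlt
    simp only [hωi]; linarith
  have htm2 : c₀ + ωi = tmap e (2*π - W) := by
    simp only [hωi, hc₀, tmap]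
    have hs2 : Real.sin (2*π - W) = -Real.sin W := by
      rw [Real.sin_sub]; simp [Real.cos_two_pi, Real.sin_two_pi]
    rw [hs2]
    simp [Real.sin_pi]
    ring
  -- interior estimates
  have hcosW : e * Real.cos W = 2*R - 1 := by
    rw [hwcos]; field_simp
  refine ⟨ωi, ωe, fun t => zc e (c₀ + (-1) * t), fun t => zc e (0 + 1 * t),
    hωi0, hωe0, ⟨⟨isKeplerSol_arc he0' he1 c₀ (-1) ωi (Or.inr rfl) hωi0, ?_, ?_⟩, ?_, ?_, ?_,
    ⟨isKeplerSol_arc he0' he1 0 1 ωe (Or.inl rfl) hωe0, ?_, ?_⟩, ?_, ?_, ?_⟩⟩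
  · -- xi (-ωi) = p
    show zc e (c₀ + (-1) * (-ωi)) = _
    rw [show c₀ + (-1) * (-ωi) = tmap e (2*π - W) by rw [← htm2]; ring,
      zc_tmap he0' he1, hXW2]
  · -- xi ωi = q
    show zc e (c₀ + (-1) * ωi) = _
    rw [show c₀ + (-1) * ωi = tmap e W by simp only [hωi]; ring,
      zc_tmap he0' he1, hXW]
  · -- angMom xi < 0
    rw [angMom, vel_arc he0' he1 c₀ (-1) ωi hωi0 0 (by constructor <;> linarith)]
    beta_reduce
    have h0 : c₀ + (-1) * 0 = tmap e π := by simp only [hc₀]; ring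
    rw [h0, Wi_tmap he0' he1]
    rw [show zc e (tmap e π) = XE e π from zc_tmap he0' he1 π]
    rw [XE, VE, smul_pt]
    simp only [Real.sin_pi, Real.cos_pi, pt_zero, pt_one]
    rw [rh]
    have h1e : (0:ℝ) < 1 - e := by linarith
    have hsp : 0 < Real.sqrt (1 - e^2) := Real.sqrt_pos.2 (by nlinarith)
    have hs2 : 0 < Real.sqrt 2 := sq2_pos
    simp only [Real.cos_pi, mul_neg, mul_one]
    have key : (-1 + e) / 2 * (-1 * (-(Real.sqrt 2 * Real.sqrt (1 - e^2)) / (1 + -e)))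
        - Real.sqrt (1 - e^2) * 0 / 2 * (-1 * (-(Real.sqrt 2 * 0) / (1 + -e)))
        = -(Real.sqrt 2 * Real.sqrt (1 - e^2)) / 2 := by
      rw [show (1:ℝ) + -e = 1 - e by ring]
      field_simp
      ring
    rw [key]
    have hpos : 0 < Real.sqrt 2 * Real.sqrt (1 - e^2) := by positivity
    linarith
  · -- ∀ t ∈ Ioo, ‖xi t‖ < R
    intro t ht
    set u : ℝ := c₀ + (-1) * t with hu
    have hu1 : tmap e W < u := by
      simp only [hu, hωi] at ht ⊢; rcases ht with ⟨h1, h2⟩; linarith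
    have hu2 : u < tmap e (2*π - W) := by
      rw [← htm2]; simp only [hu, hωi] at ht ⊢; rcases ht with ⟨h1, h2⟩; linarith
    have hw1 : W < Wi e u := by
      have := Wi_strictMono he0' he1 hu1; rwa [Wi_tmap he0' he1] at this
    have hw2 : Wi e u < 2*π - W := by
      have := Wi_strictMono he0' he1 hu2; rwa [Wi_tmap he0' he1] at this
    have hcos : Real.cos (Wi e u) < Real.cos W := by
      rcases le_or_gt (Wi e u) π with h | h
      · exact Real.cos_lt_cos_of_nonneg_of_le_pi hw0.le h hw1
      · have : Real.cos (Wi e u) = Real.cos (2*π - Wi e u) := by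
          rw [Real.cos_sub]; simp [Real.cos_two_pi, Real.sin_two_pi]
        rw [this]
        exact Real.cos_lt_cos_of_nonneg_of_le_pi hw0.le (by linarith) (by linarith)
    have : ‖zc e u‖ = rh e (Wi e u) / 2 := norm_XE he0' he1 _
    rw [show (fun t => zc e (c₀ + (-1) * t)) t = zc e u from rfl, this, rh]
    have : e * Real.cos (Wi e u) < e * Real.cos W := by
      exact mul_lt_mul_of_pos_left hcos he0
    rw [hcosW] at this
    linarith
  · -- ‖xi 0‖ = (1-e)/2
    beta_reduce
    rw [show c₀ + (-1) * 0 = tmap e π by simp only [hc₀]; ring, zc_tmap he0' he1,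
      norm_XE he0' he1, rh]
    simp [Real.cos_pi]
    ring
  · -- xe (-ωe) = p
    show zc e (0 + 1 * (-ωe)) = _
    rw [show (0:ℝ) + 1 * (-ωe) = tmap e (-W) by rw [tmap_neg]; ring, zc_tmap he0' he1, hXWn]
  · -- xe ωe = q
    show zc e (0 + 1 * ωe) = _
    rw [show (0:ℝ) + 1 * ωe = tmap e W by ring, zc_tmap he0' he1, hXW]
  · -- 0 < angMom xe
    rw [angMom, vel_arc he0' he1 0 1 ωe hωe0 0 (by constructor <;> linarith)]
    beta_reduce
    have h0 : (0 : ℝ) + 1 * 0 = tmap e 0 := by rw [tmap_zero]; ring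
    rw [h0, Wi_tmap he0' he1]
    rw [show zc e (tmap e 0) = XE e 0 from zc_tmap he0' he1 0]
    rw [XE, VE, smul_pt]
    simp only [Real.sin_zero, Real.cos_zero, pt_zero, pt_one, rh]
    have h1e : (0:ℝ) < 1 + e := by linarith
    have hsp : 0 < Real.sqrt (1 - e^2) := Real.sqrt_pos.2 (by nlinarith)
    have hs2 : 0 < Real.sqrt 2 := sq2_pos
    have : ((Real.cos 0 + e)/2) * (1 * (Real.sqrt 2 * Real.sqrt (1-e^2) * Real.cos 0 / (1 + e * Real.cos 0)))
        - Real.sqrt (1-e^2) * Real.sin 0 / 2 * (1 * (-(Real.sqrt 2 * Real.sin 0) / (1 + e * Real.cos 0)))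
        = Real.sqrt 2 * Real.sqrt (1-e^2) / 2 := by
      simp only [Real.sin_zero, Real.cos_zero]
      field_simp
      ring
    simp only [Real.sin_zero, Real.cos_zero] at this ⊢
    rw [show ((1:ℝ) + e)/2 * (1 * (Real.sqrt 2 * Real.sqrt (1-e^2) * 1 / (1 + e * 1)))
        - Real.sqrt (1-e^2) * 0 / 2 * (1 * (-(Real.sqrt 2 * 0) / (1 + e * 1)))
        = Real.sqrt 2 * Real.sqrt (1-e^2) / 2 from by field_simp; ring]
    positivity
  · -- ∀ t ∈ Ioo, R < ‖xe t‖
    intro t ht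
    set u : ℝ := 0 + 1 * t with hu
    have hu1 : tmap e (-W) < u := by
      rw [tmap_neg]; simp only [hu] at ht ⊢; rcases ht with ⟨h1, h2⟩; linarith
    have hu2 : u < tmap e W := by
      simp only [hu] at ht ⊢; rcases ht with ⟨h1, h2⟩; linarith
    have hw1 : -W < Wi e u := by
      have := Wi_strictMono he0' he1 hu1; rwa [Wi_tmap he0' he1] at this
    have hw2 : Wi e u < W := by
      have := Wi_strictMono he0' he1 hu2; rwa [Wi_tmap he0' he1] at this
    have habs : |Wi e u| < W := abs_lt.2 ⟨hw1, hw2⟩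
    have hcos : Real.cos W < Real.cos (Wi e u) := by
      rw [← Real.cos_abs (Wi e u)]
      exact Real.cos_lt_cos_of_nonneg_of_le_pi (abs_nonneg _) hwpi habs
    have hnorm : ‖zc e u‖ = rh e (Wi e u) / 2 := norm_XE he0' he1 _
    rw [show (fun t => zc e (0 + 1 * t)) t = zc e u from rfl, hnorm, rh]
    have : e * Real.cos W < e * Real.cos (Wi e u) := mul_lt_mul_of_pos_left hcos he0
    rw [hcosW] at this
    linarith
  · -- ‖xe 0‖ = (1+e)/2
    beta_reduce
    rw [show (0:ℝ) + 1 * 0 = tmap e 0 by rw [tmap_zero]; ring, zc_tmap he0' he1,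
      norm_XE he0' he1, rh]
    simp [Real.cos_zero]

end K4



/-- Existence of the four Keplerian arcs when 1/2 < |p| = |q| = R < 1 and
φ₀ ∈ (0, arcsin((1-R)/R)) (Theorem teo-ex (iii), first case). -/
theorem four_arcs_large_radius_small_angle (R φ₀ : ℝ) (hR1 : 1/2 < R) (hR2 : R < 1)
    (hφ : φ₀ ∈ Ioo 0 (arcsin ((1 - R)/R)))
    (p q : E2) (hp : p = pt (R * cos φ₀) (-(R * sin φ₀)))
    (hq : q = pt (R * cos φ₀) (R * sin φ₀)) :
    ∃ (ω₁ ω₂ ω₃ ω₄ : ℝ) (xint1 xint2 xext1 xext2 : ℝ → E2),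
      0 < ω₁ ∧ 0 < ω₂ ∧ 0 < ω₃ ∧ 0 < ω₄ ∧
      IsKeplerSolPQ ω₁ p q xint1 ∧ angMom ω₁ xint1 < 0 ∧
        (∀ t ∈ Ioo (-ω₁) ω₁, ‖xint1 t‖ < R) ∧
      IsKeplerSolPQ ω₂ p q xint2 ∧ angMom ω₂ xint2 < 0 ∧
        (∀ t ∈ Ioo (-ω₂) ω₂, ‖xint2 t‖ < R) ∧
      IsKeplerSolPQ ω₃ p q xext1 ∧ 0 < angMom ω₃ xext1 ∧
        (∀ t ∈ Ioo (-ω₃) ω₃, R < ‖xext1 t‖) ∧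
      IsKeplerSolPQ ω₄ p q xext2 ∧ 0 < angMom ω₄ xext2 ∧
        (∀ t ∈ Ioo (-ω₄) ω₄, R < ‖xext2 t‖) ∧
      ‖xext1 0‖ < ‖xext2 0‖ ∧ ‖xint2 0‖ < ‖xint1 0‖ := by
  obtain ⟨hφ0, hφ1⟩ := hφ
  have hR0 : (0:ℝ) < R := by linarith
  have harg1 : (1 - R)/R < 1 := by rw [div_lt_one hR0]; linarith
  have harg0 : 0 < (1 - R)/R := div_pos (by linarith) hR0
  have hφ2 : φ₀ < π/2 := lt_of_lt_of_le hφ1 (Real.arcsin_le_pi_div_two _)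
  have hcpos : 0 < Real.cos φ₀ := Real.cos_pos_of_mem_Ioo ⟨by linarith [Real.pi_pos], hφ2⟩
  have hc1 : Real.cos φ₀ < 1 := by
    have h := Real.cos_lt_cos_of_nonneg_of_le_pi (le_refl 0) (by linarith [Real.pi_pos]) hφ0
    simpa using h
  have hspos : 0 < Real.sin φ₀ := Real.sin_pos_of_pos_of_lt_pi hφ0 (by linarith [Real.pi_pos])
  have hsin : Real.sin φ₀ < (1 - R)/R := by
    have h := Real.strictMonoOn_sin ⟨by linarith, hφ2.le⟩
      ⟨Real.neg_pi_div_two_le_arcsin _, Real.arcsin_le_pi_div_two _⟩ hφ1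
    rwa [Real.sin_arcsin (by linarith) harg1.le] at h
  have hRs : R * Real.sin φ₀ < 1 - R := by
    have h := (lt_div_iff₀ hR0).1 hsin
    linarith
  have hD : 0 < R^2*(Real.cos φ₀)^2 - (2*R - 1) := by
    nlinarith [Real.sin_sq_add_cos_sq φ₀, hRs, mul_nonneg hR0.le hspos.le]
  set sD := Real.sqrt (R^2*(Real.cos φ₀)^2 - (2*R-1)) with hsDdef
  have hsD : sD^2 = R^2*(Real.cos φ₀)^2 - (2*R-1) := Real.sq_sqrt (by linarith)
  have hsD0 : 0 < sD := Real.sqrt_pos.2 (by linarith)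
  have hRcpos : 0 < R * Real.cos φ₀ := mul_pos hR0 hcpos
  have hRc1 : R * Real.cos φ₀ < 1 := by nlinarith
  have hRcm : 2*R - 1 < R * Real.cos φ₀ := by nlinarith [hD, hRcpos]
  set e₁ := R*Real.cos φ₀ - sD with he₁def
  set e₂ := R*Real.cos φ₀ + sD with he₂def
  have hroot1 : e₁^2 - 2*R*Real.cos φ₀*e₁ + (2*R-1) = 0 := by
    rw [he₁def]; linear_combination hsD
  have hroot2 : e₂^2 - 2*R*Real.cos φ₀*e₂ + (2*R-1) = 0 := by
    rw [he₂def]; linear_combination hsD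
  have hsD_lt1 : sD < 1 - R * Real.cos φ₀ := by
    rw [hsDdef]
    rw [Real.sqrt_lt' (by linarith)]
    nlinarith
  have hsD_lt2 : sD < R * Real.cos φ₀ := by
    rw [hsDdef]
    rw [Real.sqrt_lt' hRcpos]
    nlinarith
  have hsD_lt3 : sD < R * Real.cos φ₀ - (2*R - 1) := by
    have h1 : 0 < R * (1 - Real.cos φ₀) := mul_pos hR0 (by linarith)
    have h2 : 0 < (2*R-1) * (2*R - 2*R*Real.cos φ₀) := mul_pos (by linarith) (by linarith)
    rw [hsDdef]
    rw [Real.sqrt_lt' (by linarith)]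
    nlinarith [h2]
  have he10 : 0 < e₁ := by rw [he₁def]; linarith
  have he21 : e₂ < 1 := by rw [he₂def]; linarith
  have he12 : e₁ < e₂ := by rw [he₁def, he₂def]; linarith
  have he11 : e₁ < 1 := lt_trans he12 he21
  have he20 : 0 < e₂ := lt_trans he10 he12
  have hgt1 : 2*R - 1 < e₁ := by rw [he₁def]; linarith
  have hgt2 : 2*R - 1 < e₂ := by rw [he₂def]; linarith
  obtain ⟨ωi1, ωe1, xi1, xe1, hωi1, hωe1, hsol_i1, ham_i1, hint1, hn_i1,
    hsol_e1, ham_e1, hext1, hn_e1⟩ :=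
    K4.build R φ₀ e₁ hR1 hR2 hspos.le he10 he11 hgt1 hroot1
  obtain ⟨ωi2, ωe2, xi2, xe2, hωi2, hωe2, hsol_i2, ham_i2, hint2, hn_i2,
    hsol_e2, ham_e2, hext2, hn_e2⟩ :=
    K4.build R φ₀ e₂ hR1 hR2 hspos.le he20 he21 hgt2 hroot2
  rw [hp, hq]
  exact ⟨ωi1, ωi2, ωe1, ωe2, xi1, xi2, xe1, xe2, hωi1, hωi2, hωe1, hωe2,
    hsol_i1, ham_i1, hint1, hsol_i2, ham_i2, hint2,
    hsol_e1, ham_e1, hext1, hsol_e2, ham_e2, hext2,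
    by rw [hn_e1, hn_e2]; linarith, by rw [hn_i1, hn_i2]; linarith⟩
end
end

section
/- Let x:[−ω,ω]→ℝ²∖{0} be a solution of problem (K) with |x(t)|<1 for all t∈[−ω,ω]. Set S=∫_{−ω}^{ω}(1/|x(τ)|−1)dτ and s(t)=S^{−1}∫_{−ω}^{t}(1/|x(τ)|−1)dτ. Then S>0, s:[−ω,ω]→[0,1] is a strictly increasing C¹ bijection with C¹ inverse t(·), and the curve γ(σ)=x(t(σ)), σ∈[0,1], is C², takes values in the Hill region H, and satisfies the geodesic equation (d/ds)(W(γ(s))γ̇(s)) = (1/2)|γ̇(s)|²∇W(γ(s)) on (0,1), where W(x)=1/|x|−1 and ∇W(x)=−x/|x|³. -/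
noncomputable section
open Set Real Filter
open scoped RealInnerProductSpace

/-- The Hill region H = {x ∈ ℝ² : 0 < |x| < 1}. -/
def Hill : Set E2 := {x | 0 < ‖x‖ ∧ ‖x‖ < 1}

/-- The conformal factor W(x) = 1/|x| - 1. -/
def Wf (x : E2) : ℝ := ‖x‖⁻¹ - 1

/-- The gradient ∇W(x) = -x/|x|³. -/
def gradW (x : E2) : E2 := -(‖x‖ ^ 3)⁻¹ • x

/-- Velocity of a curve defined on [0, 1]. -/
def gvel (γ : ℝ → E2) (s : ℝ) : E2 := derivWithin γ (Icc 0 1) s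

/-- Geodesic of the conformal metric W(x)⟨·,·⟩ on the Hill region, parameterized on [0,1]:
a C² curve with values in H satisfying (d/ds)(W(γ)γ̇) = (1/2)|γ̇|²∇W(γ). -/
def IsGeodesic (γ : ℝ → E2) : Prop :=
  ContDiffOn ℝ 2 γ (Icc 0 1) ∧ (∀ s ∈ Icc (0:ℝ) 1, γ s ∈ Hill) ∧
  ∀ s ∈ Ioo (0:ℝ) 1,
    derivWithin (fun u => Wf (γ u) • gvel γ u) (Icc 0 1) s
      = ((1/2) * ‖gvel γ s‖ ^ 2) • gradW (γ s)

/-- S = ∫_{-ω}^{ω} (1/|x(τ)| - 1) dτ. -/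
def Srep (ω : ℝ) (x : ℝ → E2) : ℝ := ∫ τ in (-ω)..ω, (‖x τ‖⁻¹ - 1)

/-- The Maupertuis change of variable s(t) = S⁻¹ ∫_{-ω}^{t} (1/|x(τ)| - 1) dτ. -/
def srep (ω : ℝ) (x : ℝ → E2) (t : ℝ) : ℝ :=
  (Srep ω x)⁻¹ * ∫ τ in (-ω)..t, (‖x τ‖⁻¹ - 1)

----------------------------------------------------------------
-- auxiliary defs
def fM (x : ℝ → E2) (t : ℝ) : ℝ := ‖x t‖⁻¹ - 1
def cM (ω t : ℝ) : ℝ := max (-ω) (min t ω)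
def gM (ω : ℝ) (x : ℝ → E2) (t : ℝ) : ℝ := fM x (cM ω t)
def sM (ω : ℝ) (x : ℝ → E2) (t : ℝ) : ℝ := (Srep ω x)⁻¹ * ∫ τ in (-ω)..t, gM ω x τ

section aux
variable {ω : ℝ} {x : ℝ → E2}

lemma hIlt (hx : IsKeplerSol ω x) : -ω < ω := by have := hx.1; linarith

lemma norm_pos_aux (hx : IsKeplerSol ω x) {t : ℝ} (ht : t ∈ Icc (-ω) ω) : 0 < ‖x t‖ :=
  norm_pos_iff.mpr (hx.2.2.1 t ht)

lemma fM_pos (hx : IsKeplerSol ω x) (hb : ∀ t ∈ Icc (-ω) ω, ‖x t‖ < 1)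
    {t : ℝ} (ht : t ∈ Icc (-ω) ω) : 0 < fM x t := by
  have h1 := norm_pos_aux hx ht
  have h2 := hb t ht
  have : 1 < ‖x t‖⁻¹ := (one_lt_inv₀ h1).mpr h2
  simp only [fM]; linarith

lemma fM_contOn (hx : IsKeplerSol ω x) : ContinuousOn (fM x) (Icc (-ω) ω) :=
  ((hx.2.1.continuousOn.norm).inv₀ fun t ht => (norm_pos_aux hx ht).ne').sub continuousOn_const

lemma cM_mem (hx : IsKeplerSol ω x) (t : ℝ) : cM ω t ∈ Icc (-ω) ω :=
  ⟨le_max_left _ _, max_le (hIlt hx).le (min_le_right _ _)⟩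

lemma cM_eq {t : ℝ} (ht : t ∈ Icc (-ω) ω) : cM ω t = t := by
  simp only [cM, min_eq_left ht.2, max_eq_right ht.1]

lemma gM_cont (hx : IsKeplerSol ω x) : Continuous (gM ω x) :=
  (fM_contOn hx).comp_continuous
    (continuous_const.max (continuous_id.min continuous_const)) (cM_mem hx)

lemma gM_pos (hx : IsKeplerSol ω x) (hb : ∀ t ∈ Icc (-ω) ω, ‖x t‖ < 1) (t : ℝ) :
    0 < gM ω x t := fM_pos hx hb (cM_mem hx t)

lemma gM_eq_fM (hx : IsKeplerSol ω x) {t : ℝ} (ht : t ∈ Icc (-ω) ω) : gM ω x t = fM x t := by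
  simp only [gM, cM_eq ht]

lemma integral_fM_eq (hx : IsKeplerSol ω x) {t : ℝ} (ht : t ∈ Icc (-ω) ω) :
    (∫ τ in (-ω)..t, fM x τ) = ∫ τ in (-ω)..t, gM ω x τ := by
  refine intervalIntegral.integral_congr fun u hu => ?_
  rw [uIcc_of_le ht.1] at hu
  exact (gM_eq_fM hx (Icc_subset_Icc le_rfl ht.2 hu)).symm

lemma Srep_eq (hx : IsKeplerSol ω x) : Srep ω x = ∫ τ in (-ω)..ω, gM ω x τ := by
  rw [show Srep ω x = ∫ τ in (-ω)..ω, fM x τ from rfl]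
  exact integral_fM_eq hx ⟨(hIlt hx).le, le_rfl⟩

lemma Srep_pos (hx : IsKeplerSol ω x) (hb : ∀ t ∈ Icc (-ω) ω, ‖x t‖ < 1) : 0 < Srep ω x := by
  rw [Srep_eq hx]
  exact intervalIntegral.intervalIntegral_pos_of_pos_on
    ((gM_cont hx).intervalIntegrable _ _) (fun u _ => gM_pos hx hb u) (hIlt hx)

lemma srep_eq_sM (hx : IsKeplerSol ω x) {t : ℝ} (ht : t ∈ Icc (-ω) ω) :
    srep ω x t = sM ω x t := by
  rw [show srep ω x t = (Srep ω x)⁻¹ * ∫ τ in (-ω)..t, fM x τ from rfl, sM,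
    integral_fM_eq hx ht]

lemma sM_hasDerivAt (hx : IsKeplerSol ω x) (t : ℝ) :
    HasDerivAt (sM ω x) ((Srep ω x)⁻¹ * gM ω x t) t :=
  (((gM_cont hx).integral_hasStrictDerivAt (-ω) t).hasDerivAt).const_mul _

lemma sM_deriv_pos (hx : IsKeplerSol ω x) (hb : ∀ t ∈ Icc (-ω) ω, ‖x t‖ < 1) (t : ℝ) :
    0 < (Srep ω x)⁻¹ * gM ω x t :=
  mul_pos (inv_pos.mpr (Srep_pos hx hb)) (gM_pos hx hb t)

lemma sM_strictMono (hx : IsKeplerSol ω x) (hb : ∀ t ∈ Icc (-ω) ω, ‖x t‖ < 1) :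
    StrictMono (sM ω x) :=
  strictMono_of_deriv_pos fun t => by
    rw [(sM_hasDerivAt hx t).deriv]; exact sM_deriv_pos hx hb t

lemma sM_cont (hx : IsKeplerSol ω x) : Continuous (sM ω x) :=
  continuous_iff_continuousAt.mpr fun t => (sM_hasDerivAt hx t).continuousAt

lemma sM_neg (hx : IsKeplerSol ω x) : sM ω x (-ω) = 0 := by
  simp [sM]

lemma sM_pos_end (hx : IsKeplerSol ω x) (hb : ∀ t ∈ Icc (-ω) ω, ‖x t‖ < 1) :
    sM ω x ω = 1 := by
  rw [sM, ← Srep_eq hx, inv_mul_cancel₀ (Srep_pos hx hb).ne']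

lemma sM_tendsto_atTop (hx : IsKeplerSol ω x) (hb : ∀ t ∈ Icc (-ω) ω, ‖x t‖ < 1) :
    Tendsto (sM ω x) atTop atTop := by
  have heq : ∀ t, ω ≤ t →
      sM ω x ω + (Srep ω x)⁻¹ * ((t - ω) * gM ω x ω) = sM ω x t := by
    intro t htt
    have hsplit : (∫ τ in (-ω)..ω, gM ω x τ) + ∫ τ in ω..t, gM ω x τ
        = ∫ τ in (-ω)..t, gM ω x τ :=
      intervalIntegral.integral_add_adjacent_intervals
        (((gM_cont hx).intervalIntegrable _ _)) (((gM_cont hx).intervalIntegrable _ _))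
    have hconst : (∫ τ in ω..t, gM ω x τ) = (t - ω) * gM ω x ω := by
      rw [intervalIntegral.integral_congr (g := fun _ => gM ω x ω) ?_,
        intervalIntegral.integral_const, smul_eq_mul]
      intro u hu
      rw [uIcc_of_le htt] at hu
      have h1 : cM ω u = ω := by
        simp only [cM]
        rw [min_eq_right hu.1, max_eq_right (hIlt hx).le]
      have h2 : cM ω ω = ω := cM_eq ⟨(hIlt hx).le, le_rfl⟩
      simp only [gM, h1, h2]
    simp only [sM]
    rw [← hsplit, hconst]; ring
  refine Tendsto.congr' (eventuallyEq_of_mem (eventually_ge_atTop ω) heq) ?_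
  refine tendsto_atTop_add_const_left _ _ ?_
  refine Tendsto.const_mul_atTop (inv_pos.mpr (Srep_pos hx hb)) ?_
  refine Tendsto.atTop_mul_const (gM_pos hx hb ω) ?_
  exact tendsto_atTop_add_const_right _ _ tendsto_id

lemma sM_tendsto_atBot (hx : IsKeplerSol ω x) (hb : ∀ t ∈ Icc (-ω) ω, ‖x t‖ < 1) :
    Tendsto (sM ω x) atBot atBot := by
  have heq : ∀ t, t ≤ -ω →
      (Srep ω x)⁻¹ * ((t + ω) * gM ω x (-ω)) = sM ω x t := by
    intro t htt
    have hconst : (∫ τ in (-ω)..t, gM ω x τ) = (t + ω) * gM ω x (-ω) := by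
      rw [intervalIntegral.integral_congr (g := fun _ => gM ω x (-ω)) ?_,
        intervalIntegral.integral_const, smul_eq_mul, sub_neg_eq_add]
      intro u hu
      rw [uIcc_of_ge htt] at hu
      have h1 : cM ω u = -ω := by
        simp only [cM]
        rw [min_eq_left (le_trans hu.2 (hIlt hx).le), max_eq_left hu.2]
      have h2 : cM ω (-ω) = -ω := cM_eq ⟨le_rfl, (hIlt hx).le⟩
      simp only [gM, h1, h2]
    simp only [sM]
    rw [hconst]
  refine Tendsto.congr' (eventuallyEq_of_mem (eventually_le_atBot (-ω)) heq) ?_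
  refine Tendsto.const_mul_atBot (inv_pos.mpr (Srep_pos hx hb)) ?_
  refine Tendsto.atBot_mul_const (gM_pos hx hb (-ω)) ?_
  exact tendsto_atBot_add_const_right _ _ tendsto_id

lemma sM_surj (hx : IsKeplerSol ω x) (hb : ∀ t ∈ Icc (-ω) ω, ‖x t‖ < 1) :
    Function.Surjective (sM ω x) :=
  (sM_cont hx).surjective (sM_tendsto_atTop hx hb) (sM_tendsto_atBot hx hb)

end aux

def tauM (ω : ℝ) (x : ℝ → E2) : ℝ → ℝ := Function.invFun (sM ω x)

section tau
variable {ω : ℝ} {x : ℝ → E2}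

lemma tauM_left (hx : IsKeplerSol ω x) (hb : ∀ t ∈ Icc (-ω) ω, ‖x t‖ < 1) (t : ℝ) :
    tauM ω x (sM ω x t) = t :=
  Function.leftInverse_invFun (sM_strictMono hx hb).injective t

lemma tauM_right (hx : IsKeplerSol ω x) (hb : ∀ t ∈ Icc (-ω) ω, ‖x t‖ < 1) (y : ℝ) :
    sM ω x (tauM ω x y) = y :=
  Function.rightInverse_invFun (sM_surj hx hb) y

lemma tauM_strictMono (hx : IsKeplerSol ω x) (hb : ∀ t ∈ Icc (-ω) ω, ‖x t‖ < 1) :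
    StrictMono (tauM ω x) := by
  intro a b hab
  rw [← (sM_strictMono hx hb).lt_iff_lt, tauM_right hx hb, tauM_right hx hb]
  exact hab

lemma tauM_surj (hx : IsKeplerSol ω x) (hb : ∀ t ∈ Icc (-ω) ω, ‖x t‖ < 1) :
    Function.Surjective (tauM ω x) := fun t => ⟨sM ω x t, tauM_left hx hb t⟩

lemma tauM_cont (hx : IsKeplerSol ω x) (hb : ∀ t ∈ Icc (-ω) ω, ‖x t‖ < 1) :
    Continuous (tauM ω x) :=
  Monotone.continuous_of_denseRange (tauM_strictMono hx hb).monotone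
    (tauM_surj hx hb).denseRange

lemma tauM_hasDerivAt (hx : IsKeplerSol ω x) (hb : ∀ t ∈ Icc (-ω) ω, ‖x t‖ < 1) (y : ℝ) :
    HasDerivAt (tauM ω x) ((Srep ω x)⁻¹ * gM ω x (tauM ω x y))⁻¹ y :=
  HasDerivAt.of_local_left_inverse (tauM_cont hx hb).continuousAt
    (sM_hasDerivAt hx _) (sM_deriv_pos hx hb _).ne'
    (Eventually.of_forall (tauM_right hx hb))

lemma tauM_zero (hx : IsKeplerSol ω x) (hb : ∀ t ∈ Icc (-ω) ω, ‖x t‖ < 1) :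
    tauM ω x 0 = -ω := by rw [← sM_neg hx, tauM_left hx hb]

lemma tauM_one (hx : IsKeplerSol ω x) (hb : ∀ t ∈ Icc (-ω) ω, ‖x t‖ < 1) :
    tauM ω x 1 = ω := by rw [← sM_pos_end hx hb, tauM_left hx hb]

lemma tauM_mapsTo (hx : IsKeplerSol ω x) (hb : ∀ t ∈ Icc (-ω) ω, ‖x t‖ < 1) :
    MapsTo (tauM ω x) (Icc 0 1) (Icc (-ω) ω) := by
  intro σ hσ
  constructor
  · rw [← tauM_zero hx hb]; exact (tauM_strictMono hx hb).monotone hσ.1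
  · have := (tauM_strictMono hx hb).monotone hσ.2
    rwa [tauM_one hx hb] at this

lemma tauM_mapsTo_interior (hx : IsKeplerSol ω x) (hb : ∀ t ∈ Icc (-ω) ω, ‖x t‖ < 1)
    {σ : ℝ} (hσ : σ ∈ Ioo (0:ℝ) 1) : tauM ω x σ ∈ Ioo (-ω) ω := by
  constructor
  · rw [← tauM_zero hx hb]; exact tauM_strictMono hx hb hσ.1
  · have := tauM_strictMono hx hb hσ.2
    rwa [tauM_one hx hb] at this

end tau

section geo
variable {ω : ℝ} {x : ℝ → E2}

lemma fM_contDiffOn (hx : IsKeplerSol ω x) : ContDiffOn ℝ 1 (fM x) (Icc (-ω) ω) := by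
  refine ContDiffOn.sub ?_ contDiffOn_const
  refine ContDiffOn.inv ?_ fun t ht => (norm_pos_aux hx ht).ne'
  exact (hx.2.1.of_le (by norm_num)).norm ℝ hx.2.2.1

lemma tauM_contDiffOn_one (hx : IsKeplerSol ω x) (hb : ∀ t ∈ Icc (-ω) ω, ‖x t‖ < 1) :
    ContDiffOn ℝ 1 (tauM ω x) (Icc 0 1) := by
  refine ContDiff.contDiffOn ?_
  rw [contDiff_one_iff_deriv]
  refine ⟨fun y => (tauM_hasDerivAt hx hb y).differentiableAt, ?_⟩
  have : deriv (tauM ω x) = fun y => ((Srep ω x)⁻¹ * gM ω x (tauM ω x y))⁻¹ :=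
    funext fun y => (tauM_hasDerivAt hx hb y).deriv
  rw [this]
  exact (continuous_const.mul ((gM_cont hx).comp (tauM_cont hx hb))).inv₀
    fun y => (sM_deriv_pos hx hb _).ne'

lemma tauM_derivWithin (hx : IsKeplerSol ω x) (hb : ∀ t ∈ Icc (-ω) ω, ‖x t‖ < 1)
    {σ : ℝ} (hσ : σ ∈ Icc (0:ℝ) 1) :
    derivWithin (tauM ω x) (Icc 0 1) σ = Srep ω x * (fM x (tauM ω x σ))⁻¹ := by
  rw [((tauM_hasDerivAt hx hb σ).hasDerivWithinAt).derivWithin (uniqueDiffOn_Icc one_pos σ hσ),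
    mul_inv, inv_inv, gM_eq_fM hx (tauM_mapsTo hx hb hσ)]

lemma tauM_hasDerivWithinAt (hx : IsKeplerSol ω x) (hb : ∀ t ∈ Icc (-ω) ω, ‖x t‖ < 1)
    {σ : ℝ} (hσ : σ ∈ Icc (0:ℝ) 1) :
    HasDerivWithinAt (tauM ω x) (Srep ω x * (fM x (tauM ω x σ))⁻¹) (Icc 0 1) σ := by
  have := (tauM_hasDerivAt hx hb σ).hasDerivWithinAt (s := Icc 0 1)
  rwa [mul_inv, inv_inv, gM_eq_fM hx (tauM_mapsTo hx hb hσ)] at this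

lemma tauM_contDiffOn_two (hx : IsKeplerSol ω x) (hb : ∀ t ∈ Icc (-ω) ω, ‖x t‖ < 1) :
    ContDiffOn ℝ 2 (tauM ω x) (Icc 0 1) := by
  rw [show (2 : WithTop ℕ∞) = 1 + 1 by norm_num,
    contDiffOn_succ_iff_derivWithin (uniqueDiffOn_Icc one_pos)]
  refine ⟨(tauM_contDiffOn_one hx hb).differentiableOn one_ne_zero, by simp, ?_⟩
  refine ContDiffOn.congr ?_ fun σ hσ => tauM_derivWithin hx hb hσ
  refine ContDiffOn.mul contDiffOn_const ?_
  refine ContDiffOn.inv ?_ fun σ hσ => (fM_pos hx hb (tauM_mapsTo hx hb hσ)).ne'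
  exact (fM_contDiffOn hx).comp (tauM_contDiffOn_one hx hb) (tauM_mapsTo hx hb)

lemma vel_hasDerivWithinAt (hx : IsKeplerSol ω x) {t : ℝ} (ht : t ∈ Icc (-ω) ω) :
    HasDerivWithinAt x (vel ω x t) (Icc (-ω) ω) t :=
  ((hx.2.1.differentiableOn (by norm_num)) t ht).hasDerivWithinAt

lemma gvel_eq (hx : IsKeplerSol ω x) (hb : ∀ t ∈ Icc (-ω) ω, ‖x t‖ < 1)
    {σ : ℝ} (hσ : σ ∈ Icc (0:ℝ) 1) :
    gvel (x ∘ tauM ω x) σ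
      = (Srep ω x * (fM x (tauM ω x σ))⁻¹) • vel ω x (tauM ω x σ) :=
  ((vel_hasDerivWithinAt hx (tauM_mapsTo hx hb hσ)).scomp σ
    (tauM_hasDerivWithinAt hx hb hσ) (tauM_mapsTo hx hb)).derivWithin
    (uniqueDiffOn_Icc one_pos σ hσ)

lemma energy_eq (hx : IsKeplerSol ω x) {t : ℝ} (ht : t ∈ Icc (-ω) ω) :
    ‖vel ω x t‖ ^ 2 = 2 * fM x t := by
  have := hx.2.2.2.2 t ht
  simp only [fM]; linarith

lemma geodesic_main (hx : IsKeplerSol ω x) (hb : ∀ t ∈ Icc (-ω) ω, ‖x t‖ < 1) :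
    IsGeodesic (x ∘ tauM ω x) := by
  have hIuniq : UniqueDiffOn ℝ (Icc (-ω) ω) := uniqueDiffOn_Icc (hIlt hx)
  refine ⟨hx.2.1.comp (tauM_contDiffOn_two hx hb) (tauM_mapsTo hx hb),
    fun σ hσ => ⟨norm_pos_aux hx (tauM_mapsTo hx hb hσ), hb _ (tauM_mapsTo hx hb hσ)⟩, ?_⟩
  intro σ hσ
  have hσI : σ ∈ Icc (0:ℝ) 1 := Ioo_subset_Icc_self hσ
  have hmemI : tauM ω x σ ∈ Icc (-ω) ω := tauM_mapsTo hx hb hσI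
  have hfσ : 0 < fM x (tauM ω x σ) := fM_pos hx hb hmemI
  have hS : 0 < Srep ω x := Srep_pos hx hb
  set S := Srep ω x
  -- the function Wf(γ) • gvel γ agrees with S • (vel ∘ τ) on [0,1]
  have hEq : EqOn (fun u => Wf ((x ∘ tauM ω x) u) • gvel (x ∘ tauM ω x) u)
      (fun u => S • vel ω x (tauM ω x u)) (Icc 0 1) := by
    intro u hu
    have hfu : 0 < fM x (tauM ω x u) := fM_pos hx hb (tauM_mapsTo hx hb hu)
    have hW : Wf ((x ∘ tauM ω x) u) = fM x (tauM ω x u) := rfl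
    simp only [gvel_eq hx hb hu, hW, smul_smul]
    congr 1
    field_simp
    rfl
  rw [derivWithin_congr hEq (hEq hσI)]
  -- derivative of S • (vel ∘ τ)
  have hvelC1 : ContDiffOn ℝ 1 (vel ω x) (Icc (-ω) ω) :=
    hx.2.1.derivWithin hIuniq (by norm_num)
  have hveld : HasDerivWithinAt (vel ω x) (-(‖x (tauM ω x σ)‖ ^ 3)⁻¹ • x (tauM ω x σ))
      (Icc (-ω) ω) (tauM ω x σ) := by
    have := ((hvelC1.differentiableOn one_ne_zero) _ hmemI).hasDerivWithinAt
    rwa [show derivWithin (vel ω x) (Icc (-ω) ω) (tauM ω x σ)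
      = -(‖x (tauM ω x σ)‖ ^ 3)⁻¹ • x (tauM ω x σ) from
        hx.2.2.2.1 _ (tauM_mapsTo_interior hx hb hσ)] at this
  have hcomp : HasDerivWithinAt (fun u => S • vel ω x (tauM ω x u))
      (S • ((S * (fM x (tauM ω x σ))⁻¹) • (-(‖x (tauM ω x σ)‖ ^ 3)⁻¹ • x (tauM ω x σ))))
      (Icc 0 1) σ :=
    (hveld.scomp σ (tauM_hasDerivWithinAt hx hb hσI) (tauM_mapsTo hx hb)).const_smul S
  rw [hcomp.derivWithin (uniqueDiffOn_Icc one_pos σ hσI)]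
  -- compare with RHS
  have hnormv : ‖gvel (x ∘ tauM ω x) σ‖ ^ 2
      = (S * (fM x (tauM ω x σ))⁻¹) ^ 2 * ‖vel ω x (tauM ω x σ)‖ ^ 2 := by
    rw [gvel_eq hx hb hσI, norm_smul, mul_pow, Real.norm_eq_abs, sq_abs]
  rw [hnormv, energy_eq hx hmemI]
  show S • (S * (fM x (tauM ω x σ))⁻¹) • (-(‖x (tauM ω x σ)‖ ^ 3)⁻¹ • x (tauM ω x σ))
    = _ • gradW ((x ∘ tauM ω x) σ)
  rw [show gradW ((x ∘ tauM ω x) σ)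
    = -(‖x (tauM ω x σ)‖ ^ 3)⁻¹ • x (tauM ω x σ) from rfl, smul_smul, smul_smul, smul_smul]
  congr 1
  have hcancel : fM x (tauM ω x σ) * (fM x (tauM ω x σ))⁻¹ ^ 2 = (fM x (tauM ω x σ))⁻¹ := by
    rw [sq, ← mul_assoc, mul_inv_cancel₀ hfσ.ne', one_mul]
  have hn : 0 < ‖x (tauM ω x σ)‖ := norm_pos_aux hx hmemI
  field_simp [hfσ.ne']

end geo

section main
variable {ω : ℝ} {x : ℝ → E2}

lemma sM_contDiff (hx : IsKeplerSol ω x) : ContDiff ℝ 1 (sM ω x) := by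
  rw [contDiff_one_iff_deriv]
  refine ⟨fun t => (sM_hasDerivAt hx t).differentiableAt, ?_⟩
  have : deriv (sM ω x) = fun t => (Srep ω x)⁻¹ * gM ω x t :=
    funext fun t => (sM_hasDerivAt hx t).deriv
  rw [this]
  exact continuous_const.mul (gM_cont hx)

end main

/-- Maupertuis-Jacobi principle (Proposition prop_maup): reparameterizing a solution of the
fixed-energy Kepler problem by the Maupertuis change of variable yields a geodesic of the
conformal metric W(x)⟨·,·⟩ on the Hill region. -/
theorem maupertuis_reparam (ω : ℝ) (x : ℝ → E2) (hx : IsKeplerSol ω x)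
    (hb : ∀ t ∈ Icc (-ω) ω, ‖x t‖ < 1) :
    0 < Srep ω x ∧
    StrictMonoOn (srep ω x) (Icc (-ω) ω) ∧
    ContDiffOn ℝ 1 (srep ω x) (Icc (-ω) ω) ∧
    srep ω x (-ω) = 0 ∧ srep ω x ω = 1 ∧
    ∃ τ : ℝ → ℝ, ContDiffOn ℝ 1 τ (Icc (0:ℝ) 1) ∧
      (∀ s ∈ Icc (0:ℝ) 1, τ s ∈ Icc (-ω) ω) ∧
      (∀ t ∈ Icc (-ω) ω, τ (srep ω x t) = t) ∧
      (∀ s ∈ Icc (0:ℝ) 1, srep ω x (τ s) = s) ∧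
      IsGeodesic (x ∘ τ) := by
  refine ⟨Srep_pos hx hb, ?_, ?_,
    (srep_eq_sM hx ⟨le_rfl, (hIlt hx).le⟩).trans (sM_neg hx),
    (srep_eq_sM hx ⟨(hIlt hx).le, le_rfl⟩).trans (sM_pos_end hx hb),
    tauM ω x, tauM_contDiffOn_one hx hb, fun s hs => tauM_mapsTo hx hb hs,
    fun t ht => ?_, fun s hs => ?_, geodesic_main hx hb⟩
  · intro a ha b hb' hab
    rw [srep_eq_sM hx ha, srep_eq_sM hx hb']
    exact sM_strictMono hx hb hab
  · exact ((sM_contDiff hx).contDiffOn).congr fun t ht => srep_eq_sM hx ht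
  · rw [srep_eq_sM hx ht]
    exact tauM_left hx hb t
  · exact (srep_eq_sM hx (tauM_mapsTo hx hb hs)).trans (tauM_right hx hb s)
end
end
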